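/- arXiv:2602.17983 — 9 statements merged into one kernel-verified Lean document; each statement's English description precedes it below -/
import Mathlib

section
/- Let P be an r-saturated weakly graded poset whose rank map r takes values between 1 and n. Assume: (1) for each p ∈ P with r(p) = n, the subposet P_{<p} = {q ∈ P : q < p} is bowtie free; and (2) every quasi-bowtie x₁y₁x₂y₂ in P with r(x₁) = r(x₂) < r(y₁) = r(y₂) = n has a center. Then P is bowtie free. -/
/-!
Lifting the tops of a quasi-bowtie to rank `n` reduces everything to quasi-bowties with tops of
rank `n`. Those have a center by induction on the rank sum of the bottoms: when the bottoms have
different ranks, saturation lowers the higher one to the rank of the lower one, hypothesis (2)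
gives a center `w` of that equal-rank quasi-bowtie, and `w` replaces the lower bottom. Finally the
center found below the lifted tops is pushed below the original tops using that the down-sets of
the lifted tops are bowtie free.
-/

/-- A poset is *bowtie free* if every quasi-bowtie `x₁ y₁ x₂ y₂` (i.e. `xᵢ < y_j` for all
`i, j ∈ {1,2}`) has a *center*, i.e. an element `z` with `xᵢ ≤ z ≤ y_j` for all `i, j`. -/
def BowtieFree (P : Type*) [PartialOrder P] : Prop :=
  ∀ x₁ y₁ x₂ y₂ : P, x₁ < y₁ → x₁ < y₂ → x₂ < y₁ → x₂ < y₂ →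
    ∃ z : P, x₁ ≤ z ∧ x₂ ≤ z ∧ z ≤ y₁ ∧ z ≤ y₂

/-- A weakly graded poset `P` with rank map `r` taking values between `1` and `n` is
*r-saturated* if for every `p ∈ P` and all integers `m₁, m₂` with `n ≥ m₁ > r p > m₂ ≥ 1`,
there exist `p₁ ≥ p ≥ p₂` with `r p₁ = m₁` and `r p₂ = m₂`. -/
def RSaturated {P : Type*} [PartialOrder P] (r : P → ℤ) (n : ℤ) : Prop :=
  ∀ (p : P) (m₁ m₂ : ℤ), m₁ ≤ n → r p < m₁ → m₂ < r p → 1 ≤ m₂ →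
    ∃ p₁ p₂ : P, p ≤ p₁ ∧ p₂ ≤ p ∧ r p₁ = m₁ ∧ r p₂ = m₂

section

variable {P : Type*} [PartialOrder P]

def HasCenter (x₁ x₂ y₁ y₂ : P) : Prop :=
  ∃ z : P, x₁ ≤ z ∧ x₂ ≤ z ∧ z ≤ y₁ ∧ z ≤ y₂

section HasCenter

variable {x₁ x₂ y₁ y₂ : P}

theorem HasCenter.symm_left (h : HasCenter x₁ x₂ y₁ y₂) : HasCenter x₂ x₁ y₁ y₂ :=
  let ⟨z, h₁, h₂, h₃, h₄⟩ := h
  ⟨z, h₂, h₁, h₃, h₄⟩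

theorem HasCenter.symm_right (h : HasCenter x₁ x₂ y₁ y₂) : HasCenter x₁ x₂ y₂ y₁ :=
  let ⟨z, h₁, h₂, h₃, h₄⟩ := h
  ⟨z, h₁, h₂, h₄, h₃⟩

theorem HasCenter.mono_left {x : P} (h : HasCenter x x₂ y₁ y₂) (hx : x₁ ≤ x) :
    HasCenter x₁ x₂ y₁ y₂ :=
  let ⟨z, h₁, h₂, h₃, h₄⟩ := h
  ⟨z, hx.trans h₁, h₂, h₃, h₄⟩

theorem hasCenter_of_le_left (h : x₁ ≤ x₂) (h₁ : x₂ ≤ y₁) (h₂ : x₂ ≤ y₂) :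
    HasCenter x₁ x₂ y₁ y₂ :=
  ⟨x₂, h, le_rfl, h₁, h₂⟩

theorem hasCenter_of_le_right (h : y₁ ≤ y₂) (h₁ : x₁ ≤ y₁) (h₂ : x₂ ≤ y₁) :
    HasCenter x₁ x₂ y₁ y₂ :=
  ⟨y₁, h₁, h₂, le_rfl, h⟩

/-- An equality `xᵢ = yⱼ` makes the bottoms comparable. -/
theorem BowtieFree.hasCenter_of_le (hP : BowtieFree P) (h₁₁ : x₁ ≤ y₁) (h₁₂ : x₁ ≤ y₂)
    (h₂₁ : x₂ ≤ y₁) (h₂₂ : x₂ ≤ y₂) : HasCenter x₁ x₂ y₁ y₂ := by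
  by_cases hx₁₂ : x₁ ≤ x₂
  · exact hasCenter_of_le_left hx₁₂ h₂₁ h₂₂
  by_cases hx₂₁ : x₂ ≤ x₁
  · exact (hasCenter_of_le_left hx₂₁ h₁₁ h₁₂).symm_left
  exact hP x₁ y₁ x₂ y₂ (h₁₁.lt_of_ne fun h => hx₂₁ (h ▸ h₂₁))
    (h₁₂.lt_of_ne fun h => hx₂₁ (h ▸ h₂₂)) (h₂₁.lt_of_ne fun h => hx₁₂ (h ▸ h₁₁))
    (h₂₂.lt_of_ne fun h => hx₁₂ (h ▸ h₁₂))

theorem hasCenter_of_bowtieFree_lt {p : P} (hp : BowtieFree {q : P // q < p})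
    (h₁₁ : x₁ ≤ y₁) (h₁₂ : x₁ ≤ y₂) (h₂₁ : x₂ ≤ y₁) (h₂₂ : x₂ ≤ y₂) (hy₁ : y₁ ≤ p)
    (hy₂ : y₂ ≤ p) : HasCenter x₁ x₂ y₁ y₂ := by
  rcases hy₁.lt_or_eq with hy₁ | rfl
  · rcases hy₂.lt_or_eq with hy₂ | rfl
    · obtain ⟨z, hz⟩ := hp.hasCenter_of_le (x₁ := ⟨x₁, h₁₁.trans_lt hy₁⟩) (y₁ := ⟨y₁, hy₁⟩)
        (x₂ := ⟨x₂, h₂₁.trans_lt hy₁⟩) (y₂ := ⟨y₂, hy₂⟩) h₁₁ h₁₂ h₂₁ h₂₂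
      exact ⟨z, hz⟩
    · exact hasCenter_of_le_right hy₁.le h₁₁ h₂₁
  · exact (hasCenter_of_le_right hy₂ h₁₂ h₂₂).symm_right

end HasCenter

section Rank

variable {r : P → ℤ} {n : ℤ}

theorem exists_le_rank_eq_of_lt (hmono : StrictMono r) (hlo : ∀ p : P, 1 ≤ r p)
    (hhi : ∀ p : P, r p ≤ n) (hsat : RSaturated r n) {x y : P} (hxy : x < y) :
    ∃ Y : P, y ≤ Y ∧ r Y = n := by
  rcases (hhi y).lt_or_eq with hy | hy
  · obtain ⟨Y, -, hyY, -, hY, -⟩ := hsat y n (r x) le_rfl hy (hmono hxy) (hlo x)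
    exact ⟨Y, hyY, hY⟩
  · exact ⟨y, le_rfl, hy⟩

variable (hmono : StrictMono r) (hlo : ∀ p : P, 1 ≤ r p) (hsat : RSaturated r n)
  (h2 : ∀ x₁ y₁ x₂ y₂ : P, x₁ < y₁ → x₁ < y₂ → x₂ < y₁ → x₂ < y₂ →
    r x₁ = r x₂ → r x₁ < r y₁ → r y₁ = r y₂ → r y₂ = n →
    ∃ z : P, x₁ ≤ z ∧ x₂ ≤ z ∧ z ≤ y₁ ∧ z ≤ y₂)
include hmono hlo hsat h2

theorem exists_lt_of_rank_lt {x₁ x₂ y₁ y₂ : P} (hx : ¬x₁ ≤ x₂) (hr : r x₁ < r x₂)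
    (h₁₁ : x₁ < y₁) (h₁₂ : x₁ < y₂) (h₂₁ : x₂ < y₁) (h₂₂ : x₂ < y₂) (hy₁ : r y₁ = n)
    (hy₂ : r y₂ = n) : ∃ w : P, x₁ < w ∧ w ≤ y₁ ∧ w ≤ y₂ := by
  obtain ⟨-, b, -, hbx, -, hb⟩ :=
    hsat x₂ n (r x₁) le_rfl (hy₁ ▸ hmono h₂₁) hr (hlo x₁)
  obtain ⟨w, hxw, hbw, hw₁, hw₂⟩ := h2 x₁ y₁ b y₂ h₁₁ h₁₂ (hbx.trans_lt h₂₁)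
    (hbx.trans_lt h₂₂) hb.symm (hmono h₁₁) (hy₁.trans hy₂.symm) hy₂
  refine ⟨w, hxw.lt_of_ne fun hxw' => hx ?_, hw₁, hw₂⟩
  -- `b ≤ w = x₁` with `r b = r x₁` forces `b = x₁`
  have hbw' : b = w := hbw.eq_of_not_lt fun h => (hmono h).ne (hb.trans (congrArg r hxw'))
  exact hxw' ▸ hbw' ▸ hbx

theorem hasCenter_of_rank_eq {x₁ x₂ y₁ y₂ : P} (h₁₁ : x₁ ≤ y₁) (h₁₂ : x₁ ≤ y₂)
    (h₂₁ : x₂ ≤ y₁) (h₂₂ : x₂ ≤ y₂) (hy₁ : r y₁ = n) (hy₂ : r y₂ = n) :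
    HasCenter x₁ x₂ y₁ y₂ := by
  by_cases hx₁₂ : x₁ ≤ x₂
  · exact hasCenter_of_le_left hx₁₂ h₂₁ h₂₂
  by_cases hx₂₁ : x₂ ≤ x₁
  · exact (hasCenter_of_le_left hx₂₁ h₁₁ h₁₂).symm_left
  have s₁₁ : x₁ < y₁ := h₁₁.lt_of_ne fun h => hx₂₁ (h ▸ h₂₁)
  have s₁₂ : x₁ < y₂ := h₁₂.lt_of_ne fun h => hx₂₁ (h ▸ h₂₂)
  have s₂₁ : x₂ < y₁ := h₂₁.lt_of_ne fun h => hx₁₂ (h ▸ h₁₁)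
  have s₂₂ : x₂ < y₂ := h₂₂.lt_of_ne fun h => hx₁₂ (h ▸ h₁₂)
  -- `hr₁`, `hr₂` and `hmono hxw` below bound the termination measure
  have hr₁ := hmono s₁₁
  have hr₂ := hmono s₂₁
  rcases lt_trichotomy (r x₁) (r x₂) with hr | hr | hr
  · obtain ⟨w, hxw, hw₁, hw₂⟩ :=
      exists_lt_of_rank_lt hmono hlo hsat h2 hx₁₂ hr s₁₁ s₁₂ s₂₁ s₂₂ hy₁ hy₂
    have := hmono hxw
    exact (hasCenter_of_rank_eq hw₁ hw₂ h₂₁ h₂₂ hy₁ hy₂).mono_left hxw.le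
  · exact h2 x₁ y₁ x₂ y₂ s₁₁ s₁₂ s₂₁ s₂₂ hr hr₁ (hy₁.trans hy₂.symm) hy₂
  · obtain ⟨w, hxw, hw₁, hw₂⟩ :=
      exists_lt_of_rank_lt hmono hlo hsat h2 hx₂₁ hr s₂₁ s₂₂ s₁₁ s₁₂ hy₁ hy₂
    have := hmono hxw
    exact ((hasCenter_of_rank_eq hw₁ hw₂ h₁₁ h₁₂ hy₁ hy₂).mono_left hxw.le).symm_left
termination_by (2 * n - r x₁ - r x₂).toNat
decreasing_by all_goals omega

end Rank

end

/-- Let `P` be an `r`-saturated weakly graded poset whose rank map `r`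
takes values between `1` and `n`.  Assume (1) for each `p` of rank `n`, the subposet
`P_{<p}` is bowtie free; and (2) every quasi-bowtie `x₁ y₁ x₂ y₂` with
`r x₁ = r x₂ < r y₁ = r y₂ = n` has a center.  Then `P` is bowtie free. -/
theorem bowtieFree_of_saturated {P : Type*} [PartialOrder P] (n : ℤ) (r : P → ℤ)
    (hmono : StrictMono r) (hlo : ∀ p : P, 1 ≤ r p) (hhi : ∀ p : P, r p ≤ n)
    (hsat : RSaturated r n)
    (h1 : ∀ p : P, r p = n → BowtieFree {q : P // q < p})
    (h2 : ∀ x₁ y₁ x₂ y₂ : P, x₁ < y₁ → x₁ < y₂ → x₂ < y₁ → x₂ < y₂ →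
      r x₁ = r x₂ → r x₁ < r y₁ → r y₁ = r y₂ → r y₂ = n →
      ∃ z : P, x₁ ≤ z ∧ x₂ ≤ z ∧ z ≤ y₁ ∧ z ≤ y₂) :
    BowtieFree P := by
  intro x₁ y₁ x₂ y₂ h₁₁ h₁₂ h₂₁ h₂₂
  obtain ⟨Y₁, hyY₁, hY₁⟩ := exists_le_rank_eq_of_lt hmono hlo hhi hsat h₁₁
  obtain ⟨Y₂, hyY₂, hY₂⟩ := exists_le_rank_eq_of_lt hmono hlo hhi hsat h₁₂
  obtain ⟨w, hx₁w, hx₂w, hwY₁, hwY₂⟩ := hasCenter_of_rank_eq hmono hlo hsat h2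
    (h₁₁.le.trans hyY₁) (h₁₂.le.trans hyY₂) (h₂₁.le.trans hyY₁) (h₂₂.le.trans hyY₂) hY₁ hY₂
  obtain ⟨u, hx₁u, hx₂u, huy₁, huw⟩ :=
    hasCenter_of_bowtieFree_lt (h1 Y₁ hY₁) h₁₁.le hx₁w h₂₁.le hx₂w hyY₁ hwY₁
  obtain ⟨z, hx₁z, hx₂z, hzy₂, hzu⟩ :=
    hasCenter_of_bowtieFree_lt (h1 Y₂ hY₂) h₁₂.le hx₁u h₂₂.le hx₂u hyY₂ (huw.trans hwY₂)
  exact ⟨z, hx₁z, hx₂z, hzu.trans huy₁, hzy₂⟩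
end

section
/- Let P be an r-saturated weakly graded poset whose rank map r takes values between 1 and n, and assume: (1) for each p ∈ P with r(p) = n, the subposet P_{<p} = {q ∈ P : q < p} is bowtie free; and (2) every quasi-bowtie x₁y₁x₂y₂ in P with r(x₁) = r(x₂) < r(y₁) = r(y₂) = n has a center. Then every quasi-bowtie x₁y₁x₂y₂ in P with r(x₁) = r(x₂) has a center (with no constraint on the ranks of y₁ and y₂). -/
theorem RSaturated.exists_le_rank_eq {P : Type*} [PartialOrder P] {r : P → ℤ} {n : ℤ}
    (hsat : RSaturated r n) {y : P} (hy : r y ≤ n) (hy₁ : 1 < r y) :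
    ∃ t, y ≤ t ∧ r t = n := by
  rcases hy.eq_or_lt with hyn | hyn
  · exact ⟨y, le_rfl, hyn⟩
  · obtain ⟨t, -, hyt, -, htn, -⟩ := hsat y n 1 le_rfl hyn hy₁ le_rfl
    exact ⟨t, hyt, htn⟩

theorem BowtieFree.exists_center_of_le {P : Type*} [PartialOrder P] {t x₁ x₂ y z : P}
    (ht : BowtieFree {q : P // q < t}) (hx₁y : x₁ < y) (hx₂y : x₂ < y) (hyt : y ≤ t)
    (hx₁z : x₁ ≤ z) (hx₂z : x₂ ≤ z) (hzt : z ≤ t) :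
    ∃ w, x₁ ≤ w ∧ x₂ ≤ w ∧ w ≤ y ∧ w ≤ z := by
  by_cases hzy : z ≤ y
  · exact ⟨z, hx₁z, hx₂z, hzy, le_rfl⟩
  rcases hyt.eq_or_lt with rfl | hyt
  · exact absurd hzt hzy
  rcases hzt.eq_or_lt with rfl | hzt
  · exact ⟨y, hx₁y.le, hx₂y.le, le_rfl, hyt.le⟩
  have hx₁z' : x₁ < z := hx₁z.lt_of_ne (by rintro rfl; exact hzy hx₁y.le)
  have hx₂z' : x₂ < z := hx₂z.lt_of_ne (by rintro rfl; exact hzy hx₂y.le)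
  obtain ⟨w, hx₁w, hx₂w, hwy, hwz⟩ := ht ⟨x₁, hx₁y.trans hyt⟩ ⟨y, hyt⟩ ⟨x₂, hx₂y.trans hyt⟩
    ⟨z, hzt⟩ hx₁y hx₁z' hx₂y hx₂z'
  exact ⟨w, hx₁w, hx₂w, hwy, hwz⟩

/-- Under the hypotheses of the bowtie-free criterion, every quasi-bowtie
`x₁ y₁ x₂ y₂` with `r x₁ = r x₂` has a center (with no constraint on the ranks of
`y₁` and `y₂`). -/
theorem quasiBowtie_center_of_bottom_rank_eq {P : Type*} [PartialOrder P] (n : ℤ) (r : P → ℤ)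
    (hmono : StrictMono r) (hlo : ∀ p : P, 1 ≤ r p) (hhi : ∀ p : P, r p ≤ n)
    (hsat : RSaturated r n)
    (h1 : ∀ p : P, r p = n → BowtieFree {q : P // q < p})
    (h2 : ∀ x₁ y₁ x₂ y₂ : P, x₁ < y₁ → x₁ < y₂ → x₂ < y₁ → x₂ < y₂ →
      r x₁ = r x₂ → r x₁ < r y₁ → r y₁ = r y₂ → r y₂ = n →
      ∃ z : P, x₁ ≤ z ∧ x₂ ≤ z ∧ z ≤ y₁ ∧ z ≤ y₂) :
    ∀ x₁ y₁ x₂ y₂ : P, x₁ < y₁ → x₁ < y₂ → x₂ < y₁ → x₂ < y₂ → r x₁ = r x₂ →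
      ∃ z : P, x₁ ≤ z ∧ x₂ ≤ z ∧ z ≤ y₁ ∧ z ≤ y₂ := by
  intro x₁ y₁ x₂ y₂ h₁₁ h₁₂ h₂₁ h₂₂ hx
  obtain ⟨t₁, hyt₁, ht₁⟩ := hsat.exists_le_rank_eq (hhi y₁) ((hlo x₁).trans_lt (hmono h₁₁))
  obtain ⟨t₂, hyt₂, ht₂⟩ := hsat.exists_le_rank_eq (hhi y₂) ((hlo x₁).trans_lt (hmono h₁₂))
  obtain ⟨z, hx₁z, hx₂z, hzt₁, hzt₂⟩ :=
    h2 x₁ t₁ x₂ t₂ (h₁₁.trans_le hyt₁) (h₁₂.trans_le hyt₂) (h₂₁.trans_le hyt₁)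
      (h₂₂.trans_le hyt₂) hx (hmono (h₁₁.trans_le hyt₁)) (ht₁.trans ht₂.symm) ht₂
  obtain ⟨w, hx₁w, hx₂w, hwy₁, hwz⟩ :=
    (h1 t₁ ht₁).exists_center_of_le h₁₁ h₂₁ hyt₁ hx₁z hx₂z hzt₁
  obtain ⟨v, hx₁v, hx₂v, hvy₂, hvw⟩ :=
    (h1 t₂ ht₂).exists_center_of_le h₁₂ h₂₂ hyt₂ hx₁w hx₂w (hwz.trans hzt₂)
  exact ⟨v, hx₁v, hx₂v, hvw.trans hwy₁, hvy₂⟩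
end

section
/- Let P be an r-saturated weakly graded poset whose rank map r takes values between 1 and n. Suppose: (1) P is bowtie free; (2) for each p ∈ P with r(p) = 1, the subposet P_{>p} = {q ∈ P : q > p} is upward flag; and (3) any three pairwise upper-bounded elements of P of rank 1 have a common upper bound. Then P is upward flag. -/
/-- A poset is *upward flag* if any three pairwise upper-bounded elements have a common
upper bound. -/
def UpwardFlag (P : Type*) [PartialOrder P] : Prop :=
  ∀ p₁ p₂ p₃ : P, (∃ q, p₁ ≤ q ∧ p₂ ≤ q) → (∃ q, p₂ ≤ q ∧ p₃ ≤ q) →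
    (∃ q, p₁ ≤ q ∧ p₃ ≤ q) → ∃ q, p₁ ≤ q ∧ p₂ ≤ q ∧ p₃ ≤ q

/-!
Call a triple *flag* if, once pairwise upper bounded, it has a common upper bound. A rank-`n`
element is maximal, so every triple containing one is flag; every other element lies above an
element of rank `1`, and triples of rank-`1` elements are flag by hypothesis. It remains to
replace an element `a₀` of a flag triple `a₀, b, c` by any `a ≥ a₀`. A common bound `v` of
`a₀, b, c` and the bowtie centers `z₁` (of `a₀, b` below `v` and a bound of `a, b`) and `z₂`
(likewise for `c`) reduce this to the pairwise bounded triple `a, z₁, z₂`, which lies above `a₀`.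
Triples with a common lower bound are flag because, going down to rank `1` by saturation, they
live in some `P_{>p}` with `r p = 1`.
-/

section

variable {P : Type*} [PartialOrder P]

def UpwardFlagTriple (a b c : P) : Prop :=
  (∃ q, a ≤ q ∧ b ≤ q) → (∃ q, b ≤ q ∧ c ≤ q) → (∃ q, a ≤ q ∧ c ≤ q) →
    ∃ q, a ≤ q ∧ b ≤ q ∧ c ≤ q

namespace UpwardFlagTriple

variable {a b c : P}

theorem swap₁₂ (h : UpwardFlagTriple a b c) : UpwardFlagTriple b a c := by
  rintro ⟨u, hbu, hau⟩ hac hbc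
  obtain ⟨q, haq, hbq, hcq⟩ := h ⟨u, hau, hbu⟩ hbc hac
  exact ⟨q, hbq, haq, hcq⟩

theorem swap₁₃ (h : UpwardFlagTriple a b c) : UpwardFlagTriple c b a := by
  rintro ⟨u, hcu, hbu⟩ ⟨v, hbv, hav⟩ ⟨w, hcw, haw⟩
  obtain ⟨q, haq, hbq, hcq⟩ := h ⟨v, hav, hbv⟩ ⟨u, hbu, hcu⟩ ⟨w, haw, hcw⟩
  exact ⟨q, hcq, hbq, haq⟩

end UpwardFlagTriple

theorem upwardFlagTriple_of_le {a b c : P} (hab : a ≤ b) : UpwardFlagTriple a b c := by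
  rintro - ⟨q, hbq, hcq⟩ -
  exact ⟨q, hab.trans hbq, hbq, hcq⟩

theorem upwardFlagTriple_of_isMax {a b c : P} (ha : IsMax a) : UpwardFlagTriple a b c := by
  rintro ⟨u, hau, hbu⟩ - ⟨w, haw, hcw⟩
  exact ⟨a, le_rfl, hbu.trans (ha hau), hcw.trans (ha haw)⟩

theorem upwardFlagTriple_of_upwardFlag_gt {p x y z : P} (hp : UpwardFlag {q : P // p < q})
    (hx : p ≤ x) (hy : p ≤ y) (hz : p ≤ z) : UpwardFlagTriple x y z := by
  rcases hx.lt_or_eq with hx | rfl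
  · rcases hy.lt_or_eq with hy | rfl
    · rcases hz.lt_or_eq with hz | rfl
      · rintro ⟨u, hxu, hyu⟩ ⟨v, hyv, hzv⟩ ⟨w, hxw, hzw⟩
        obtain ⟨q, hxq, hyq, hzq⟩ := hp ⟨x, hx⟩ ⟨y, hy⟩ ⟨z, hz⟩
          ⟨⟨u, hx.trans_le hxu⟩, hxu, hyu⟩ ⟨⟨v, hy.trans_le hyv⟩, hyv, hzv⟩
          ⟨⟨w, hx.trans_le hxw⟩, hxw, hzw⟩
        exact ⟨q, hxq, hyq, hzq⟩
      · exact (upwardFlagTriple_of_le hx.le).swap₁₃.swap₁₂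
    · exact (upwardFlagTriple_of_le hx.le).swap₁₂
  · exact upwardFlagTriple_of_le hy

theorem BowtieFree.exists_center (hP : BowtieFree P) {x₁ x₂ y₁ y₂ : P}
    (h₁₁ : x₁ ≤ y₁) (h₁₂ : x₁ ≤ y₂) (h₂₁ : x₂ ≤ y₁) (h₂₂ : x₂ ≤ y₂) :
    ∃ z, x₁ ≤ z ∧ x₂ ≤ z ∧ z ≤ y₁ ∧ z ≤ y₂ := by
  rcases h₁₁.lt_or_eq with l₁₁ | rfl
  · rcases h₁₂.lt_or_eq with l₁₂ | rfl
    · rcases h₂₁.lt_or_eq with l₂₁ | rfl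
      · rcases h₂₂.lt_or_eq with l₂₂ | rfl
        · exact hP x₁ y₁ x₂ y₂ l₁₁ l₁₂ l₂₁ l₂₂
        · exact ⟨x₂, h₁₂, le_rfl, h₂₁, le_rfl⟩
      · exact ⟨x₂, h₁₁, le_rfl, le_rfl, h₂₂⟩
    · exact ⟨x₁, le_rfl, h₂₂, h₁₁, le_rfl⟩
  · exact ⟨x₁, le_rfl, h₂₁, le_rfl, h₁₂⟩

theorem UpwardFlagTriple.of_le_left (hP : BowtieFree P)
    (habove : ∀ p x y z : P, p ≤ x → p ≤ y → p ≤ z → UpwardFlagTriple x y z)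
    {a₀ a b c : P} (h : UpwardFlagTriple a₀ b c) (ha : a₀ ≤ a) : UpwardFlagTriple a b c := by
  rintro ⟨u, hau, hbu⟩ hbc ⟨w, haw, hcw⟩
  obtain ⟨v, ha₀v, hbv, hcv⟩ := h ⟨u, ha.trans hau, hbu⟩ hbc ⟨w, ha.trans haw, hcw⟩
  obtain ⟨z₁, ha₀z₁, hbz₁, hz₁u, hz₁v⟩ := hP.exists_center (ha.trans hau) ha₀v hbu hbv
  obtain ⟨z₂, ha₀z₂, hcz₂, hz₂w, hz₂v⟩ := hP.exists_center (ha.trans haw) ha₀v hcw hcv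
  obtain ⟨q, haq, hz₁q, hz₂q⟩ := habove a₀ a z₁ z₂ ha ha₀z₁ ha₀z₂
    ⟨u, hau, hz₁u⟩ ⟨v, hz₁v, hz₂v⟩ ⟨w, haw, hz₂w⟩
  exact ⟨q, haq, hbz₁.trans hz₁q, hcz₂.trans hz₂q⟩

section Rank

variable {n : ℤ} {r : P → ℤ}

theorem isMax_or_exists_rank_one_le (hmono : StrictMono r) (hlo : ∀ p, 1 ≤ r p)
    (hhi : ∀ p, r p ≤ n) (hsat : RSaturated r n) (p : P) :
    IsMax p ∨ ∃ p₀ ≤ p, r p₀ = 1 := by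
  by_cases hpn : r p = n
  · refine Or.inl fun q hpq => by_contra fun hqp => ?_
    have := hmono (lt_of_le_not_ge hpq hqp)
    linarith [hhi q]
  by_cases hp1 : r p = 1
  · exact Or.inr ⟨p, le_rfl, hp1⟩
  obtain ⟨-, p₀, -, hp₀, -, hp₀r⟩ :=
    hsat p n 1 le_rfl (lt_of_le_of_ne (hhi p) hpn) (lt_of_le_of_ne (hlo p) (Ne.symm hp1)) le_rfl
  exact Or.inr ⟨p₀, hp₀, hp₀r⟩

theorem upwardFlagTriple_of_le_of_le_of_le (hmono : StrictMono r) (hlo : ∀ p, 1 ≤ r p)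
    (hhi : ∀ p, r p ≤ n) (hsat : RSaturated r n)
    (hgt : ∀ p : P, r p = 1 → UpwardFlag {q : P // p < q})
    {p x y z : P} (hx : p ≤ x) (hy : p ≤ y) (hz : p ≤ z) : UpwardFlagTriple x y z := by
  rcases isMax_or_exists_rank_one_le hmono hlo hhi hsat p with hp | ⟨p₀, hp₀, hp₀r⟩
  · exact upwardFlagTriple_of_le ((hp hx).trans hy)
  · exact upwardFlagTriple_of_upwardFlag_gt (hgt p₀ hp₀r) (hp₀.trans hx) (hp₀.trans hy)
      (hp₀.trans hz)

end Rank

end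

/-- Let `P` be an `r`-saturated weakly graded poset whose rank map `r`
takes values between `1` and `n`.  Suppose (1) `P` is bowtie free; (2) for each `p` of
rank `1`, the subposet `P_{>p}` is upward flag; and (3) any three pairwise upper-bounded
elements of rank `1` have a common upper bound.  Then `P` is upward flag. -/
theorem upwardFlag_of_rank_one_conditions {P : Type*} [PartialOrder P] (n : ℤ) (r : P → ℤ)
    (hmono : StrictMono r) (hlo : ∀ p : P, 1 ≤ r p) (hhi : ∀ p : P, r p ≤ n)
    (hsat : RSaturated r n)
    (h1 : BowtieFree P)
    (h2 : ∀ p : P, r p = 1 → UpwardFlag {q : P // p < q})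
    (h3 : ∀ p₁ p₂ p₃ : P, r p₁ = 1 → r p₂ = 1 → r p₃ = 1 →
      (∃ q, p₁ ≤ q ∧ p₂ ≤ q) → (∃ q, p₂ ≤ q ∧ p₃ ≤ q) → (∃ q, p₁ ≤ q ∧ p₃ ≤ q) →
      ∃ q, p₁ ≤ q ∧ p₂ ≤ q ∧ p₃ ≤ q) :
    UpwardFlag P := by
  have lift {a₀ a b c : P} (h : UpwardFlagTriple a₀ b c) (ha : a₀ ≤ a) :
      UpwardFlagTriple a b c :=
    h.of_le_left h1 (fun _ _ _ _ => upwardFlagTriple_of_le_of_le_of_le hmono hlo hhi hsat h2) ha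
  have maxOrAbove := isMax_or_exists_rank_one_le hmono hlo hhi hsat
  intro a b c
  rcases maxOrAbove a with ha | ⟨a₀, ha₀, ha₀r⟩
  · exact upwardFlagTriple_of_isMax ha
  rcases maxOrAbove b with hb | ⟨b₀, hb₀, hb₀r⟩
  · exact (upwardFlagTriple_of_isMax hb).swap₁₂
  rcases maxOrAbove c with hc | ⟨c₀, hc₀, hc₀r⟩
  · exact (upwardFlagTriple_of_isMax hc).swap₁₃
  have h₀ : UpwardFlagTriple a₀ b₀ c₀ := h3 a₀ b₀ c₀ ha₀r hb₀r hc₀r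
  have hab₀c₀ := lift h₀ ha₀
  have habc₀ := (lift hab₀c₀.swap₁₂ hb₀).swap₁₂
  exact (lift habc₀.swap₁₃ hc₀).swap₁₃
end

section
/- Let Λ be a Coxeter diagram with vertex set S and let s, t, r ∈ S be pairwise distinct vertices such that t and r lie in the same connected component of the induced diagram Λ∖{s}. Then for all g, h ∈ A_S with g·A_{S∖{s}} ∩ h·A_{S∖{t}} ≠ ∅, there exists k ∈ A_S such that k·A_{S∖{r}} ∩ g·A_{S∖{s}} ≠ ∅ and k·A_{S∖{r}} ∩ h·A_{S∖{t}} = ∅. Equivalently: for every edge xy of the Artin complex Δ_Λ with x of type ŝ and y of type t̂, there exists a vertex z of type r̂ with z adjacent to x and z not adjacent to y. -/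
open scoped Pointwise

/-- A *Coxeter diagram* on a vertex set `S`: a symmetric labeling `M` with `M s s = 1`,
and for `s ≠ t` the label `M s t` lies in `{2, 3, 4, …} ∪ {∞}`, where `0` encodes the
label `∞` and label `2` means that `s` and `t` are not joined by an edge. -/
structure CoxDiagram (S : Type*) where
  M : S → S → ℕ
  symm : ∀ s t, M s t = M t s
  diag : ∀ s, M s s = 1
  offDiag : ∀ s t, s ≠ t → M s t ≠ 1

namespace CoxDiagram

variable {S : Type*}

/-- The underlying graph of a Coxeter diagram: `s` and `t` are joined exactly when
`M s t ≠ 2`. -/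
def graph (Λ : CoxDiagram S) : SimpleGraph S where
  Adj s t := s ≠ t ∧ Λ.M s t ≠ 2
  symm := by
    constructor
    intro s t h
    exact ⟨h.1.symm, by rw [Λ.symm t s]; exact h.2⟩
  loopless := by
    constructor
    intro s h
    exact h.1 rfl

/-- The alternating word `s t s t ⋯` of length `n` in the free group on `S`. -/
def altWord (s t : S) : ℕ → FreeGroup S
  | 0 => 1
  | n + 1 => FreeGroup.of s * altWord t s n

/-- The braid relations of the Artin group of `Λ` : for each pair `s, t` with
`M s t ≠ ∞`, the relation `sts⋯ = tst⋯` (both sides alternating of length `M s t`). -/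
def artinRels (Λ : CoxDiagram S) : Set (FreeGroup S) :=
  {w | ∃ s t : S, Λ.M s t ≠ 0 ∧
    w = altWord s t (Λ.M s t) * (altWord t s (Λ.M s t))⁻¹}

/-- The Artin group of the Coxeter diagram `Λ`. -/
def ArtinGroup (Λ : CoxDiagram S) : Type _ := PresentedGroup (artinRels Λ)

instance (Λ : CoxDiagram S) : Group (ArtinGroup Λ) :=
  inferInstanceAs (Group (PresentedGroup (artinRels Λ)))

/-- The standard generator of the Artin group corresponding to `s ∈ S`. -/
def gen (Λ : CoxDiagram S) (s : S) : ArtinGroup Λ := PresentedGroup.of s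

/-- The standard parabolic subgroup `A_T` of the Artin group, generated by `T ⊆ S`. -/
def parab (Λ : CoxDiagram S) (T : Set S) : Subgroup (ArtinGroup Λ) :=
  Subgroup.closure (Λ.gen '' T)

/-- `a` and `b` are connected by an edge path of `G` all of whose vertices lie in `U`. -/
def ConnIn {V : Type*} (G : SimpleGraph V) (U : Set V) (a b : V) : Prop :=
  Relation.ReflTransGen (fun u v => u ∈ U ∧ v ∈ U ∧ G.Adj u v) a b

/-!
The Artin group maps onto the Coxeter group, which acts on `ℝ^S × ℝ` by the Tits reflections
`σ_u z = z - ⟨α_u^∨, z⟩ α_u`, where the extra coordinate is read only by the coroot of `r`. Then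
`q = (0, 1)` is fixed by `A_{S∖{r}}` and the `t`-coordinate is preserved by `A_{S∖{t}}`, so
`x ↦ (x q)_t` vanishes on `A_{S∖{t}} A_{S∖{r}}`. For a path `t = u₀, …, uₙ = r` avoiding `s`, the
element `c = u₀ ⋯ uₙ ∈ A_{S∖{s}}` moves `q` to a vector with nonpositive coordinates, negative at
`t`: each `σ_{uᵢ}` subtracts a positive multiple of `α_{uᵢ}`, because the Tits form is negative on
the edge `uᵢ uᵢ₊₁`. For `z ∈ g A_{S∖{s}} ∩ h A_{S∖{t}}` the coset `k A_{S∖{r}}` with `k = z c`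
meets `g A_{S∖{s}}`, and meeting `h A_{S∖{t}}` would put `c` in `A_{S∖{t}} A_{S∖{r}}`.
-/

def coxeterMatrix (Λ : CoxDiagram S) : CoxeterMatrix S where
  M := Matrix.of Λ.M
  isSymm := Matrix.IsSymm.ext fun s t => Λ.symm t s
  diagonal := Λ.diag
  off_diagonal := Λ.offDiag

theorem lift_altWord {B W : Type*} [Group W] {M : CoxeterMatrix B} (cs : CoxeterSystem M W)
    (a b : B) (n : ℕ) :
    FreeGroup.lift cs.simple (altWord a b n) =
      (cs.wordProd (CoxeterSystem.alternatingWord b a n))⁻¹ := by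
  induction n generalizing a b with
  | zero => simp [altWord, CoxeterSystem.alternatingWord]
  | succ n ih =>
    rw [altWord, map_mul, ih, CoxeterSystem.alternatingWord_succ, CoxeterSystem.wordProd_concat,
      mul_inv_rev, CoxeterSystem.inv_simple, FreeGroup.lift_apply_of]

def toCoxeterGroup (Λ : CoxDiagram S) : ArtinGroup Λ →* Λ.coxeterMatrix.Group :=
  PresentedGroup.toGroup (f := Λ.coxeterMatrix.toCoxeterSystem.simple) <| by
    rintro _ ⟨a, b, -, rfl⟩
    have := Λ.coxeterMatrix.toCoxeterSystem.wordProd_braidWord_eq b a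
    simp only [CoxeterSystem.braidWord, Λ.coxeterMatrix.symmetric b a] at this
    rw [map_mul, map_inv, lift_altWord, lift_altWord]
    exact mul_inv_eq_one.mpr (congrArg _ this)

theorem toCoxeterGroup_gen (Λ : CoxDiagram S) (s : S) :
    Λ.toCoxeterGroup (Λ.gen s) = Λ.coxeterMatrix.toCoxeterSystem.simple s :=
  PresentedGroup.toGroup.of _

end CoxDiagram

open Real

namespace Polynomial.Chebyshev

theorem S_eval_two_mul_cos_eq_zero {θ : ℝ} (hθ : sin θ ≠ 0) {n : ℤ}
    (h : sin ((n + 1) * θ) = 0) : (S ℝ n).eval (2 * cos θ) = 0 := by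
  have := S_two_mul_real_cos θ n
  rw [h] at this
  exact (mul_eq_zero.mp this).resolve_right hθ

theorem S_eval_two_mul_cos_add_S_eval_two_mul_cos_eq_zero {θ : ℝ} (hθ : sin θ ≠ 0) {k : ℤ}
    (h : (2 * k + 1) * θ = 2 * π) :
    (S ℝ k).eval (2 * cos θ) + (S ℝ (k - 1)).eval (2 * cos θ) = 0 := by
  have hk := S_two_mul_real_cos θ k
  have hk' := S_two_mul_real_cos θ (k - 1)
  have : sin ((k + 1) * θ) = - sin ((k - 1 + 1) * θ) := by
    rw [show (k + 1) * θ = 2 * π - (k - 1 + 1) * θ by linear_combination h, sin_two_pi_sub]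
  refine (mul_eq_zero.mp ?_).resolve_right hθ
  push_cast at hk' this
  linear_combination hk + hk' + this

/-- The two coefficients of `Module.reflection_mul_reflection_pow_apply` vanish at
`t = 2 cos (2π / m)`. -/
theorem S_coeffs_eval_two_mul_cos_two_pi_div_eq_zero {m : ℕ} (hm : 3 ≤ m) :
    (S ℝ ((m - 2) / 2)).eval (2 * cos (2 * π / m)) *
        ((S ℝ ((m - 1) / 2)).eval (2 * cos (2 * π / m)) +
          (S ℝ ((m - 3) / 2)).eval (2 * cos (2 * π / m))) = 0 ∧
      (S ℝ ((m - 1) / 2)).eval (2 * cos (2 * π / m)) *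
        ((S ℝ (m / 2)).eval (2 * cos (2 * π / m)) +
          (S ℝ ((m - 2) / 2)).eval (2 * cos (2 * π / m))) = 0 := by
  have hsin : sin (2 * π / m) ≠ 0 := by
    refine (sin_pos_of_pos_of_lt_pi (by positivity) ?_).ne'
    rw [div_lt_iff₀ (by positivity)]
    nlinarith [pi_pos, (show (3 : ℝ) ≤ m by exact_mod_cast hm)]
  have hmθ : (m : ℝ) * (2 * π / m) = 2 * π := by field_simp
  generalize 2 * π / m = θ at hsin hmθ ⊢
  obtain ⟨k, rfl | rfl⟩ := Nat.even_or_odd' m <;> push_cast at hmθ ⊢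
  · have hzero : (S ℝ (k - 1)).eval (2 * cos θ) = 0 := by
      refine S_eval_two_mul_cos_eq_zero hsin ?_
      push_cast
      rw [sub_add_cancel, show (k : ℝ) * θ = π by linarith, sin_pi]
    rw [show (2 * (k : ℤ) - 2) / 2 = k - 1 by omega, show (2 * (k : ℤ) - 1) / 2 = k - 1 by omega,
      hzero]
    simp
  · have hsum := S_eval_two_mul_cos_add_S_eval_two_mul_cos_eq_zero hsin (k := k)
      (by push_cast; linarith)
    rw [show (2 * (k : ℤ) + 1 - 2) / 2 = k - 1 by omega,
      show (2 * (k : ℤ) + 1 - 1) / 2 = k by omega, show (2 * (k : ℤ) + 1 - 3) / 2 = k - 1 by omega,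
      show (2 * (k : ℤ) + 1) / 2 = k by omega, hsum]
    simp

end Polynomial.Chebyshev

namespace Module

variable {R V : Type*} [AddCommGroup V]

theorem reflection_mul_reflection_sq_eq_one [CommRing R] [Module R V] {x y : V}
    {f g : Dual R V} (hf : f x = 2) (hg : g y = 2) (hfy : f y = 0) (hgx : g x = 0) :
    (reflection hf * reflection hg) ^ 2 = 1 := by
  ext1 z
  simp [sq, reflection_apply, hf, hg, hfy, hgx]
  module

theorem reflection_mul_reflection_pow_eq_one [Module ℝ V] {x y : V} {f g : Dual ℝ V}
    (hf : f x = 2) (hg : g y = 2) {m : ℕ} (hm : 3 ≤ m)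
    (hfg : f y * g x - 2 = 2 * cos (2 * π / m)) :
    (reflection hf * reflection hg) ^ m = 1 := by
  ext1 z
  rw [reflection_mul_reflection_pow_apply hf hg m z _ hfg.symm,
    (Polynomial.Chebyshev.S_coeffs_eval_two_mul_cos_two_pi_div_eq_zero hm).1,
    (Polynomial.Chebyshev.S_coeffs_eval_two_mul_cos_two_pi_div_eq_zero hm).2]
  simp

end Module

namespace CoxeterMatrix

variable {B : Type*} (M : CoxeterMatrix B)

/-- Twice the Tits form `B(α_u, α_v) = -cos (π / m_uv)`. The junk value `π / 0 = 0` gives the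
correct entry `-2` for `m_uv = ∞`. -/
noncomputable def titsForm (u v : B) : ℝ := -2 * cos (π / M u v)

theorem titsForm_comm (u v : B) : M.titsForm u v = M.titsForm v u := by
  rw [titsForm, titsForm, M.symmetric]

@[simp]
theorem titsForm_self (u : B) : M.titsForm u u = 2 := by
  simp [titsForm]

theorem titsForm_mul_titsForm_sub_two (u v : B) :
    M.titsForm u v * M.titsForm v u - 2 = 2 * cos (2 * π / M u v) := by
  rw [M.titsForm_comm v u, titsForm, show 2 * π / M u v = 2 * (π / M u v) by ring, cos_two_mul]
  ring

theorem titsForm_eq_zero_of_eq_two {u v : B} (h : M u v = 2) : M.titsForm u v = 0 := by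
  simp [titsForm, h]

theorem titsForm_nonpos {u v : B} (h : u ≠ v) : M.titsForm u v ≤ 0 := by
  rcases eq_or_ne (M u v) 0 with h0 | h0
  · simp [titsForm, h0]
  have hm : (2 : ℝ) ≤ M u v := by
    exact_mod_cast (by have := M.off_diagonal u v h; omega : 2 ≤ M u v)
  have : 0 ≤ cos (π / M u v) := cos_nonneg_of_mem_Icc
    ⟨by linarith [pi_pos, div_nonneg pi_pos.le (by linarith : (0 : ℝ) ≤ M u v)],
      div_le_div_of_nonneg_left pi_pos.le two_pos hm⟩
  simp only [titsForm]
  linarith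

theorem titsForm_neg {u v : B} (h : u ≠ v) (h2 : M u v ≠ 2) : M.titsForm u v < 0 := by
  rcases eq_or_ne (M u v) 0 with h0 | h0
  · simp [titsForm, h0]
  have hm : (3 : ℝ) ≤ M u v := by
    exact_mod_cast (by have := M.off_diagonal u v h; omega : 3 ≤ M u v)
  have : 0 < cos (π / M u v) := cos_pos_of_mem_Ioo
    ⟨by linarith [pi_pos, div_nonneg pi_pos.le (by linarith : (0 : ℝ) ≤ M u v)],
      by rw [div_lt_div_iff₀ (by linarith) two_pos]; nlinarith [pi_pos]⟩
  simp only [titsForm]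
  linarith

variable [Fintype B] [DecidableEq B] (r : B)

def simpleRoot (u : B) : (B → ℝ) × ℝ := (Pi.single u 1, 0)

/-- Without the extra coordinate, a vector fixed by every `σ_u` with `u ≠ r` but not by `σ_r`
need not exist when the Tits form is degenerate. -/
noncomputable def coroot (u : B) : Module.Dual ℝ ((B → ℝ) × ℝ) :=
  (∑ v, M.titsForm u v • LinearMap.proj v) ∘ₗ LinearMap.fst ℝ (B → ℝ) ℝ +
    if u = r then LinearMap.snd ℝ (B → ℝ) ℝ else 0

theorem coroot_apply (u : B) (z : (B → ℝ) × ℝ) :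
    M.coroot r u z = ∑ v, M.titsForm u v * z.1 v + if u = r then z.2 else 0 := by
  simp [coroot]
  split_ifs <;> simp

@[simp]
theorem coroot_simpleRoot (u v : B) : M.coroot r u (simpleRoot v) = M.titsForm u v := by
  simp [coroot_apply, simpleRoot, Pi.single_apply]

noncomputable def simpleReflection (u : B) : ((B → ℝ) × ℝ) ≃ₗ[ℝ] ((B → ℝ) × ℝ) :=
  Module.reflection (x := simpleRoot u) (f := M.coroot r u) (by simp)

theorem simpleReflection_apply (u : B) (z : (B → ℝ) × ℝ) :
    M.simpleReflection r u z = z - M.coroot r u z • simpleRoot u :=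
  Module.reflection_apply _ _

theorem simpleReflection_mul_simpleReflection_pow (u v : B) :
    (M.simpleReflection r u * M.simpleReflection r v) ^ M u v = 1 := by
  rcases eq_or_ne u v with rfl | huv
  · rw [M.diagonal, pow_one]
    exact LinearEquiv.ext (Module.involutive_reflection _)
  have hm := M.off_diagonal u v huv
  obtain h0 | h2 | h3 : M u v = 0 ∨ M u v = 2 ∨ 3 ≤ M u v := by omega
  · rw [h0, pow_zero]
  · rw [h2]
    exact Module.reflection_mul_reflection_sq_eq_one _ _
      (by simpa using M.titsForm_eq_zero_of_eq_two h2)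
      (by simpa [M.titsForm_comm v u] using M.titsForm_eq_zero_of_eq_two h2)
  · exact Module.reflection_mul_reflection_pow_eq_one _ _ h3
      (by simpa using M.titsForm_mul_titsForm_sub_two u v)

noncomputable def titsRep : M.Group →* (((B → ℝ) × ℝ) ≃ₗ[ℝ] ((B → ℝ) × ℝ)) :=
  M.toCoxeterSystem.lift ⟨M.simpleReflection r, M.simpleReflection_mul_simpleReflection_pow r⟩

theorem titsRep_simple (u : B) :
    M.titsRep r (M.toCoxeterSystem.simple u) = M.simpleReflection r u :=
  M.toCoxeterSystem.lift_apply_simple _ u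

def basePoint : (B → ℝ) × ℝ := (0, 1)

theorem simpleReflection_basePoint {u : B} (hur : u ≠ r) :
    M.simpleReflection r u basePoint = basePoint := by
  simp [simpleReflection_apply, coroot_apply, basePoint, hur]

theorem simpleReflection_apply_fst_of_ne {u w : B} (hwu : w ≠ u) (z : (B → ℝ) × ℝ) :
    (M.simpleReflection r u z).1 w = z.1 w := by
  simp [simpleReflection_apply, simpleRoot, hwu]

theorem coroot_pos {u w : B} (hur : u ≠ r) (huw : u ≠ w) (hM : M u w ≠ 2) {z : (B → ℝ) × ℝ}
    (hz : z.1 ≤ 0) (hzu : z.1 u = 0) (hzw : z.1 w < 0) : 0 < M.coroot r u z := by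
  rw [coroot_apply, if_neg hur, add_zero]
  refine Finset.sum_pos' (fun v _ => ?_) ⟨w, Finset.mem_univ w, ?_⟩
  · rcases eq_or_ne u v with rfl | huv
    · simp [hzu]
    · exact mul_nonneg_of_nonpos_of_nonpos (M.titsForm_nonpos huv) (hz v)
  · exact mul_pos_of_neg_of_neg (M.titsForm_neg huw hM) hzw

end CoxeterMatrix
namespace CoxDiagram

open CoxeterMatrix

variable {S : Type*}

theorem ConnIn.exists_isPath {V : Type*} [DecidableEq V] {G : SimpleGraph V} {U : Set V} {a b : V}
    (h : ConnIn G U a b) (ha : a ∈ U) :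
    ∃ p : G.Walk a b, p.IsPath ∧ ∀ x ∈ p.support, x ∈ U := by
  induction h with
  | refl => exact ⟨.nil, .nil, by simpa⟩
  | tail _ hbc ih =>
    obtain ⟨p, -, hp⟩ := ih
    refine ⟨(p.concat hbc.2.2).bypass, SimpleGraph.Walk.bypass_isPath _, fun x hx => ?_⟩
    have := SimpleGraph.Walk.support_bypass_subset_support _ hx
    simp only [SimpleGraph.Walk.support_concat, List.mem_append, List.mem_singleton] at this
    rcases this with hx | rfl
    exacts [hp x hx, hbc.2.1]

theorem list_prod_map_gen_mem_parab (Λ : CoxDiagram S) {T : Set S} {L : List S}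
    (hL : ∀ x ∈ L, x ∈ T) : (L.map Λ.gen).prod ∈ Λ.parab T :=
  list_prod_mem <| List.forall_mem_map.mpr fun u hu => Subgroup.subset_closure ⟨u, hL u hu, rfl⟩

section ArtinRep

variable [Fintype S] [DecidableEq S] (Λ : CoxDiagram S) (r : S)

noncomputable def artinRep : ArtinGroup Λ →* (((S → ℝ) × ℝ) ≃ₗ[ℝ] ((S → ℝ) × ℝ)) :=
  (Λ.coxeterMatrix.titsRep r).comp Λ.toCoxeterGroup

theorem artinRep_gen (u : S) : Λ.artinRep r (Λ.gen u) = Λ.coxeterMatrix.simpleReflection r u := by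
  rw [artinRep, MonoidHom.comp_apply, toCoxeterGroup_gen, titsRep_simple]

theorem artinRep_basePoint {x : ArtinGroup Λ} (hx : x ∈ Λ.parab {r}ᶜ) :
    Λ.artinRep r x basePoint = basePoint := by
  have : Λ.parab {r}ᶜ ≤
      (MulAction.stabilizer _ (basePoint : (S → ℝ) × ℝ)).comap (Λ.artinRep r) := by
    refine Subgroup.closure_le _ |>.mpr ?_
    rintro _ ⟨u, hu, rfl⟩
    rw [SetLike.mem_coe, Subgroup.mem_comap, MulAction.mem_stabilizer_iff, LinearEquiv.smul_def,
      artinRep_gen]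
    exact simpleReflection_basePoint _ r hu
  exact MulAction.mem_stabilizer_iff.mp (Subgroup.mem_comap.mp (this hx))

theorem artinRep_apply_fst {t : S} {x : ArtinGroup Λ} (hx : x ∈ Λ.parab {t}ᶜ)
    (z : (S → ℝ) × ℝ) : (Λ.artinRep r x z).1 t = z.1 t := by
  induction hx using Subgroup.closure_induction generalizing z with
  | mem _ hg =>
    obtain ⟨u, hu, rfl⟩ := hg
    rw [artinRep_gen]
    exact simpleReflection_apply_fst_of_ne _ r (Ne.symm hu) z
  | one => rfl
  | mul x y _ _ hx hy => rw [map_mul, LinearEquiv.mul_apply, hx, hy]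
  | inv x _ hx =>
    rw [← hx, ← LinearEquiv.mul_apply, ← map_mul, mul_inv_cancel, map_one]
    rfl

theorem artinRep_mul_basePoint_fst {t : S} {τ ρ : ArtinGroup Λ} (hτ : τ ∈ Λ.parab {t}ᶜ)
    (hρ : ρ ∈ Λ.parab {r}ᶜ) : (Λ.artinRep r (τ * ρ) basePoint).1 t = 0 := by
  rw [map_mul, LinearEquiv.mul_apply, Λ.artinRep_basePoint r hρ, Λ.artinRep_apply_fst r hτ]
  rfl

theorem exists_artinRep_walk_basePoint {u : S} (p : Λ.graph.Walk u r) (hp : p.IsPath) :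
    ∃ z : S → ℝ, z ≤ 0 ∧ z u < 0 ∧ (∀ v ∉ p.support, z v = 0) ∧
      Λ.artinRep r (p.support.map Λ.gen).prod basePoint = (z, 1) := by
  generalize hw : r = w at p
  induction p with
  | nil =>
    subst hw
    refine ⟨-Pi.single r 1, fun v => ?_, by simp, fun v hv => ?_, ?_⟩
    · by_cases hv : v = r <;> simp [hv]
    · simp_all
    · simp [artinRep_gen, simpleReflection_apply, coroot_apply, basePoint, simpleRoot]
  | @cons a b c hadj p ih =>
    rw [SimpleGraph.Walk.cons_isPath_iff] at hp
    obtain ⟨z, hz, hzb, hzp, heq⟩ := ih hw hp.1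
    subst hw
    have har : a ≠ r := fun h => hp.2 (h ▸ p.end_mem_support)
    have hza : z a = 0 := hzp a hp.2
    have hpos := Λ.coxeterMatrix.coroot_pos r har hadj.1 hadj.2 (z := (z, 1)) hz hza hzb
    refine ⟨z - Λ.coxeterMatrix.coroot r a (z, 1) • Pi.single a 1, fun v => ?_, ?_,
      fun v hv => ?_, ?_⟩
    · by_cases hv : v = a
      · subst hv; simp [hza, hpos.le]
      · simpa [hv] using hz v
    · simpa [hza] using hpos
    · rw [SimpleGraph.Walk.support_cons, List.mem_cons, not_or] at hv
      simp [hv.1, hzp v hv.2]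
    · rw [SimpleGraph.Walk.support_cons, List.map_cons, List.prod_cons, map_mul,
        LinearEquiv.mul_apply, heq, artinRep_gen, simpleReflection_apply]
      simp [simpleRoot]

end ArtinRep

theorem exists_nonadjacent_coset_general {S : Type*} [Fintype S] (Λ : CoxDiagram S)
    (s t r : S) (hst : s ≠ t)
    (hconn : ConnIn Λ.graph {x : S | x ≠ s} t r) :
    ∀ g h : ArtinGroup Λ,
      (g • (Λ.parab ({s}ᶜ) : Set (ArtinGroup Λ)) ∩
        h • (Λ.parab ({t}ᶜ) : Set (ArtinGroup Λ))).Nonempty →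
      ∃ k : ArtinGroup Λ,
        (k • (Λ.parab ({r}ᶜ) : Set (ArtinGroup Λ)) ∩
          g • (Λ.parab ({s}ᶜ) : Set (ArtinGroup Λ))).Nonempty ∧
        (k • (Λ.parab ({r}ᶜ) : Set (ArtinGroup Λ)) ∩
          h • (Λ.parab ({t}ᶜ) : Set (ArtinGroup Λ))) = ∅ := by
  classical
  rintro g h ⟨z, hzg, hzh⟩
  rw [mem_leftCoset_iff] at hzg hzh
  obtain ⟨p, hp, hps⟩ := hconn.exists_isPath hst.symm
  obtain ⟨v, -, hvt, -, hv⟩ := Λ.exists_artinRep_walk_basePoint r p hp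
  set c := (p.support.map Λ.gen).prod
  have hc : c ∈ Λ.parab {s}ᶜ := Λ.list_prod_map_gen_mem_parab hps
  refine ⟨z * c, ⟨z * c, ?_, ?_⟩, Set.eq_empty_iff_forall_notMem.mpr ?_⟩
  · rw [mem_leftCoset_iff, inv_mul_cancel]
    exact one_mem _
  · rw [mem_leftCoset_iff, ← mul_assoc]
    exact mul_mem hzg hc
  · rintro x ⟨hxk, hxh⟩
    rw [mem_leftCoset_iff] at hxk hxh
    have hτ : (h⁻¹ * z)⁻¹ * (h⁻¹ * x) ∈ Λ.parab {t}ᶜ := mul_mem (inv_mem hzh) hxh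
    have := Λ.artinRep_mul_basePoint_fst r hτ (inv_mem hxk)
    rw [show (h⁻¹ * z)⁻¹ * (h⁻¹ * x) * ((z * c)⁻¹ * x)⁻¹ = c by group, hv] at this
    exact hvt.ne this

/-- Let `Λ` be a Coxeter diagram with vertex set `S` and let
`s, t, r ∈ S` be pairwise distinct vertices such that `t` and `r` lie in the same
connected component of `Λ ∖ {s}`.  Then for all `g, h` in the Artin group with
`g·A_{S∖{s}} ∩ h·A_{S∖{t}} ≠ ∅`, there exists `k` with
`k·A_{S∖{r}} ∩ g·A_{S∖{s}} ≠ ∅` and `k·A_{S∖{r}} ∩ h·A_{S∖{t}} = ∅`. -/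
theorem exists_nonadjacent_coset {S : Type*} [Fintype S] (Λ : CoxDiagram S)
    (s t r : S) (hst : s ≠ t) (hsr : s ≠ r) (htr : t ≠ r)
    (hconn : ConnIn Λ.graph {x : S | x ≠ s} t r) :
    ∀ g h : ArtinGroup Λ,
      (g • (Λ.parab ({s}ᶜ) : Set (ArtinGroup Λ)) ∩
        h • (Λ.parab ({t}ᶜ) : Set (ArtinGroup Λ))).Nonempty →
      ∃ k : ArtinGroup Λ,
        (k • (Λ.parab ({r}ᶜ) : Set (ArtinGroup Λ)) ∩
          g • (Λ.parab ({s}ᶜ) : Set (ArtinGroup Λ))).Nonempty ∧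
        (k • (Λ.parab ({r}ᶜ) : Set (ArtinGroup Λ)) ∩
          h • (Λ.parab ({t}ᶜ) : Set (ArtinGroup Λ))) = ∅ :=
  exists_nonadjacent_coset_general Λ s t r hst hconn

end CoxDiagram
end

section
/- Let (W, S) be a Coxeter system with Coxeter matrix m. Let t₁, t₂, …, t_k ∈ S (k ≥ 1) be pairwise distinct generators such that for each 1 ≤ i ≤ k−1, m(tᵢ, tᵢ₊₁) ≥ 3 or m(tᵢ, tᵢ₊₁) = ∞ (that is, consecutive generators do not commute, so t₁, …, t_k is an embedded edge path in the Coxeter diagram). Set g = t₁t₂⋯t_k ∈ W. Then the coset g·W_{S∖{t_k}} is disjoint from the standard parabolic subgroup W_{S∖{t₁}}; that is, g·W_{S∖{t_k}} ∩ W_{S∖{t₁}} = ∅, where for T ⊆ S, W_T denotes the subgroup of W generated by T. -/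
/-!
Let `ρ` be the Tits geometric representation of `W` on `V = ⊕_{b ∈ B} ℝ α_b`, in which `s_c`
acts by the reflection `x ↦ x - 2 B(x, α_c) α_c` for the cosine form
`B(α_i, α_j) = -cos (π / m_ij)`. By Tits' lemma every vector `ρ w α_i` has all its coordinates of
the same sign: nonnegative if `ℓ(w s_i) > ℓ(w)`, nonpositive otherwise. It is proved by induction
on `ℓ(w)`, writing `w = v x` with `x` in a dihedral subgroup `⟨s_i, s_j⟩` and `v` shorter, where
the dihedral case is an explicit computation with Chebyshev polynomials.

Suppose `u = g v` with `u ∈ W_{S∖{t_1}}` and `v ∈ W_{S∖{t_k}}`, and put `γ = ρ(u⁻¹) α_{t_1}`.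
Since `u⁻¹` only changes coordinates other than `t_1`, the `t_1`-coordinate of `γ` is `1`.
But `γ = ρ(v⁻¹) (s_{t_k} ⋯ s_{t_1} α_{t_1})`, and `v⁻¹` does not change the `t_k`-coordinate,
which is at most `-1` because `B(α_{t_i}, α_{t_{i+1}}) ≤ -1/2` along the path.
-/

open scoped Pointwise

open Finsupp Real

namespace CoxeterSystem

variable {B : Type*}

theorem prod_map_alternatingWord_two_mul {G : Type*} [Monoid G] (f : B → G) (i j : B)
    (m : ℕ) : ((alternatingWord i j (2 * m)).map f).prod = (f i * f j) ^ m := by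
  induction m with
  | zero => simp [alternatingWord]
  | succ m ih =>
    rw [show 2 * (m + 1) = 2 * m + 1 + 1 by ring, alternatingWord_succ, alternatingWord_succ]
    simp [ih, pow_succ]

theorem reverse_alternatingWord (i j : B) (n : ℕ) :
    (alternatingWord i j n).reverse =
      if Even n then alternatingWord j i n else alternatingWord i j n := by
  induction n generalizing i j with
  | zero => simp [alternatingWord]
  | succ n ih =>
    conv_lhs => rw [alternatingWord_succ, List.concat_eq_append, List.reverse_append, ih]
    rcases Nat.even_or_odd n with hn | hn
    · rw [if_pos hn, if_neg (by simpa [Nat.even_add_one] using hn), alternatingWord_succ',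
        if_pos hn]
      simp
    · rw [if_neg (Nat.not_even_iff_odd.2 hn), if_pos (by simpa [Nat.even_add_one] using hn),
        alternatingWord_succ', if_neg (Nat.not_even_iff_odd.2 hn)]
      simp

end CoxeterSystem

theorem mul_pow_mul_mul_pow_eq_one {G : Type*} [Monoid G] {a b : G} (ha : a * a = 1)
    (hb : b * b = 1) (m : ℕ) : (a * b) ^ m * (b * a) ^ m = 1 := by
  induction m with
  | zero => simp
  | succ m ih =>
    calc (a * b) ^ (m + 1) * (b * a) ^ (m + 1)
        = (a * b) ^ m * (a * (b * b) * a) * (b * a) ^ m := by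
          rw [pow_succ, pow_succ']; simp only [mul_assoc]
      _ = 1 := by rw [hb, mul_one, ha, mul_one, ih]

namespace CoxeterMatrix

variable {B : Type*} (M : CoxeterMatrix B)

/-- `formCoeff i j = B(α_i, α_j)`, where `α_i = single i 1` and `M i j = 0` encodes `m_ij = ∞`. -/
noncomputable def formCoeff (i j : B) : ℝ :=
  if M i j = 0 then -1 else -cos (π / M i j)

theorem formCoeff_comm (i j : B) : M.formCoeff i j = M.formCoeff j i := by
  rw [formCoeff, formCoeff, M.symmetric]

@[simp] theorem formCoeff_self (i : B) : M.formCoeff i i = 1 := by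
  simp [formCoeff]

theorem two_le_of_ne {i j : B} (hij : i ≠ j) (h : M i j ≠ 0) : 2 ≤ M i j := by
  have := M.off_diagonal i j hij
  omega

theorem sin_pi_div_pos {i j : B} (hij : i ≠ j) (h : M i j ≠ 0) : 0 < sin (π / M i j) := by
  have h2 : (2 : ℝ) ≤ M i j := by exact_mod_cast M.two_le_of_ne hij h
  apply sin_pos_of_pos_of_lt_pi (by positivity)
  rw [div_lt_iff₀ (by positivity)]
  nlinarith [pi_pos]

theorem formCoeff_nonpos {i j : B} (hij : i ≠ j) : M.formCoeff i j ≤ 0 := by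
  unfold formCoeff
  split_ifs with h
  · norm_num
  · have h2 : (2 : ℝ) ≤ M i j := by exact_mod_cast M.two_le_of_ne hij h
    have hle : π / M i j ≤ π / 2 := div_le_div_of_nonneg_left pi_pos.le (by norm_num) h2
    have hge : -(π / 2) ≤ π / M i j := by linarith [pi_pos, (by positivity : 0 ≤ π / M i j)]
    exact neg_nonpos.2 (cos_nonneg_of_mem_Icc ⟨hge, hle⟩)

theorem formCoeff_le_neg_half {i j : B} (h : M i j = 0 ∨ 3 ≤ M i j) :
    M.formCoeff i j ≤ -(1 / 2) := by
  unfold formCoeff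
  rcases h with h | h
  · rw [if_pos h]; norm_num
  · rw [if_neg (by omega)]
    have h3 : (3 : ℝ) ≤ M i j := by exact_mod_cast h
    have := cos_le_cos_of_nonneg_of_le_pi (by positivity) (by linarith [pi_pos])
      (div_le_div_of_nonneg_left pi_pos.le (by norm_num) h3)
    rw [cos_pi_div_three] at this
    linarith

noncomputable def rootForm (c : B) : (B →₀ ℝ) →ₗ[ℝ] ℝ :=
  linearCombination ℝ fun b => M.formCoeff b c

theorem rootForm_apply (c : B) (x : B →₀ ℝ) :
    M.rootForm c x = x.sum fun b r => r * M.formCoeff b c := by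
  simp [rootForm, linearCombination_apply]

@[simp] theorem rootForm_single (b c : B) (r : ℝ) :
    M.rootForm c (single b r) = r * M.formCoeff b c := by
  simp [rootForm]

noncomputable def reflection (c : B) : Module.End ℝ (B →₀ ℝ) :=
  LinearMap.id - (2 • M.rootForm c).smulRight (single c 1)

theorem reflection_apply (c : B) (x : B →₀ ℝ) :
    M.reflection c x = x - (2 * M.rootForm c x) • single c 1 := by
  simp [reflection]

theorem reflection_single_self (c : B) : M.reflection c (single c 1) = -single c 1 := by
  rw [reflection_apply, rootForm_single, formCoeff_self]
  module

theorem reflection_apply_of_rootForm_eq_zero {c : B} {x : B →₀ ℝ} (h : M.rootForm c x = 0) :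
    M.reflection c x = x := by
  simp [reflection_apply, h]

theorem reflection_mul_self (c : B) : M.reflection c * M.reflection c = 1 := by
  refine LinearMap.ext fun x => ?_
  rw [Module.End.mul_apply, reflection_apply M c x, map_sub, map_smul, reflection_single_self,
    Module.End.one_apply, reflection_apply]
  module

theorem reflection_apply_apply_of_ne {c d : B} (h : d ≠ c) (x : B →₀ ℝ) :
    M.reflection c x d = x d := by
  simp [reflection_apply, Ne.symm h]

theorem reflection_apply_apply_self (c : B) (x : B →₀ ℝ) :
    M.reflection c x c = x c - 2 * M.rootForm c x := by
  simp [reflection_apply]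

/-- `dihedralCoeff i j r = sin (r π / m) / sin (π / m)` for `m = M i j`, and `r` if `m = ∞`. -/
noncomputable def dihedralCoeff (i j : B) (r : ℕ) : ℝ :=
  (Polynomial.Chebyshev.U ℝ ((r : ℤ) - 1)).eval (-M.formCoeff i j)

theorem dihedralCoeff_zero (i j : B) : M.dihedralCoeff i j 0 = 0 := by
  simp [dihedralCoeff]

theorem dihedralCoeff_one (i j : B) : M.dihedralCoeff i j 1 = 1 := by
  simp [dihedralCoeff]

theorem dihedralCoeff_add_two (i j : B) (r : ℕ) :
    M.dihedralCoeff i j (r + 2) =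
      -2 * M.formCoeff i j * M.dihedralCoeff i j (r + 1) - M.dihedralCoeff i j r := by
  have := Polynomial.Chebyshev.U_add_two ℝ ((r : ℤ) - 1)
  simp only [dihedralCoeff, Nat.cast_add, Nat.cast_ofNat, Nat.cast_one]
  rw [show (r : ℤ) + 2 - 1 = (r - 1) + 2 by ring, show (r : ℤ) + 1 - 1 = (r - 1) + 1 by ring,
    this]
  simp only [Polynomial.eval_sub, Polynomial.eval_mul, Polynomial.eval_X, Polynomial.eval_ofNat]
  ring

theorem dihedralCoeff_of_eq_zero {i j : B} (h : M i j = 0) (r : ℕ) :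
    M.dihedralCoeff i j r = r := by
  simp [dihedralCoeff, formCoeff, h, Polynomial.Chebyshev.U_eval_one]

theorem dihedralCoeff_mul_sin {i j : B} (h : M i j ≠ 0) (r : ℕ) :
    M.dihedralCoeff i j r * sin (π / M i j) = sin (r * (π / M i j)) := by
  simp [dihedralCoeff, formCoeff, h, Polynomial.Chebyshev.U_real_cos]

theorem dihedralCoeff_nonneg {i j : B} (hij : i ≠ j) {r : ℕ} (hr : M i j = 0 ∨ r ≤ M i j) :
    0 ≤ M.dihedralCoeff i j r := by
  by_cases h : M i j = 0
  · rw [M.dihedralCoeff_of_eq_zero h]; positivity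
  have hr : (r : ℝ) ≤ M i j := by exact_mod_cast hr.resolve_left h
  have hsin := M.sin_pi_div_pos hij h
  refine nonneg_of_mul_nonneg_left ?_ hsin
  rw [dihedralCoeff_mul_sin M h]
  apply sin_nonneg_of_nonneg_of_le_pi (by positivity)
  calc (r : ℝ) * (π / M i j) ≤ M i j * (π / M i j) := by gcongr
    _ = π := by field_simp

theorem dihedralCoeff_two_mul {i j : B} (hij : i ≠ j) (h : M i j ≠ 0) :
    M.dihedralCoeff i j (2 * M i j) = 0 ∧ M.dihedralCoeff i j (2 * M i j + 1) = 1 := by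
  have hsin := M.sin_pi_div_pos hij h
  constructor
  · refine (mul_eq_zero.1 ?_).resolve_right hsin.ne'
    rw [dihedralCoeff_mul_sin M h]
    push_cast
    rw [show 2 * (M i j : ℝ) * (π / M i j) = (2 : ℕ) * π by field_simp; norm_num]
    exact sin_nat_mul_pi 2
  · refine mul_right_cancel₀ hsin.ne' ?_
    rw [dihedralCoeff_mul_sin M h, one_mul]
    push_cast
    rw [show (2 * (M i j : ℝ) + 1) * (π / M i j) = π / M i j + 2 * π by field_simp; ring]
    exact sin_add_two_pi _

theorem reflection_apply_add_left (i j : B) (a b : ℝ) :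
    M.reflection i (a • single i 1 + b • single j 1) =
      (-a - 2 * M.formCoeff i j * b) • single i 1 + b • single j 1 := by
  rw [reflection_apply, map_add, map_smul, map_smul, rootForm_single, rootForm_single,
    formCoeff_self, M.formCoeff_comm j i]
  module

theorem reflection_apply_add_right (i j : B) (a b : ℝ) :
    M.reflection j (a • single i 1 + b • single j 1) =
      a • single i 1 + (-2 * M.formCoeff i j * a - b) • single j 1 := by
  rw [reflection_apply, map_add, map_smul, map_smul, rootForm_single, rootForm_single,
    formCoeff_self]
  module

open CoxeterSystem in
theorem prod_map_reflection_alternatingWord_apply_single (i j : B) (n : ℕ) :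
    ((alternatingWord i j n).map M.reflection).prod (single i 1) =
      if Even n then
        M.dihedralCoeff i j (n + 1) • single i 1 + M.dihedralCoeff i j n • single j 1
      else M.dihedralCoeff i j n • single i 1 + M.dihedralCoeff i j (n + 1) • single j 1 := by
  induction n with
  | zero => simp [alternatingWord, dihedralCoeff_zero, dihedralCoeff_one]
  | succ n ih =>
    rw [alternatingWord_succ', List.map_cons, List.prod_cons, Module.End.mul_apply, ih]
    rcases Nat.even_or_odd n with hn | hn
    · rw [if_pos hn, if_pos hn, if_neg (by simpa [Nat.even_add_one] using hn),
        reflection_apply_add_right, ← dihedralCoeff_add_two]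
    · rw [if_neg (Nat.not_even_iff_odd.2 hn), if_neg (Nat.not_even_iff_odd.2 hn),
        if_pos (by simpa [Nat.even_add_one] using hn), reflection_apply_add_left,
        M.dihedralCoeff_add_two i j n]
      congr 2
      ring

theorem formCoeff_sq_ne_one {i j : B} (hij : i ≠ j) (h : M i j ≠ 0) :
    M.formCoeff i j ^ 2 ≠ 1 := by
  have hsin := M.sin_pi_div_pos hij h
  have := sin_sq_add_cos_sq (π / M i j)
  rw [formCoeff, if_neg h, neg_sq]
  nlinarith

theorem exists_eq_add_rootForm_eq_zero {i j : B} (h : M.formCoeff i j ^ 2 ≠ 1)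
    (x : B →₀ ℝ) : ∃ (y : B →₀ ℝ) (a b : ℝ), x = y + a • single i 1 + b • single j 1 ∧
      M.rootForm i y = 0 ∧ M.rootForm j y = 0 := by
  set k := M.formCoeff i j
  have hk : 1 - k ^ 2 ≠ 0 := sub_ne_zero.2 (Ne.symm h)
  set a := (M.rootForm i x - k * M.rootForm j x) / (1 - k ^ 2)
  set b := (M.rootForm j x - k * M.rootForm i x) / (1 - k ^ 2)
  refine ⟨x - a • single i 1 - b • single j 1, a, b, by abel, ?_, ?_⟩
  · simp only [map_sub, map_smul, rootForm_single, formCoeff_self, M.formCoeff_comm j i,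
      smul_eq_mul, a, b]
    field_simp
    ring
  · simp only [map_sub, map_smul, rootForm_single, formCoeff_self, smul_eq_mul, a, b]
    field_simp
    ring

theorem reflection_mul_reflection_pow_apply_single {i j : B} (hij : i ≠ j) (h : M i j ≠ 0) :
    ((M.reflection i * M.reflection j) ^ M i j) (single i 1) = single i 1 := by
  obtain ⟨h₀, h₁⟩ := M.dihedralCoeff_two_mul hij h
  rw [← CoxeterSystem.prod_map_alternatingWord_two_mul,
    prod_map_reflection_alternatingWord_apply_single, if_pos (even_two_mul _), h₀, h₁]
  simp

theorem reflection_mul_reflection_pow {i j : B} (hij : i ≠ j) (h : M i j ≠ 0) :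
    (M.reflection i * M.reflection j) ^ M i j = 1 := by
  set r := M.reflection i * M.reflection j
  have hi : (r ^ M i j) (single i 1) = single i 1 :=
    M.reflection_mul_reflection_pow_apply_single hij h
  have hj : (r ^ M i j) (single j 1) = single j 1 := by
    have hji := M.reflection_mul_reflection_pow_apply_single hij.symm (M.symmetric i j ▸ h)
    rw [← M.symmetric] at hji
    calc (r ^ M i j) (single j 1)
        = (r ^ M i j * (M.reflection j * M.reflection i) ^ M i j) (single j 1) := by
          rw [Module.End.mul_apply, hji]
      _ = single j 1 := by
          rw [mul_pow_mul_mul_pow_eq_one (M.reflection_mul_self i) (M.reflection_mul_self j),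
            Module.End.one_apply]
  refine LinearMap.ext fun x => ?_
  obtain ⟨y, a, b, rfl, hyi, hyj⟩ :=
    M.exists_eq_add_rootForm_eq_zero (M.formCoeff_sq_ne_one hij h) x
  have hy : r y = y := by
    rw [Module.End.mul_apply, M.reflection_apply_of_rootForm_eq_zero hyj,
      M.reflection_apply_of_rootForm_eq_zero hyi]
  rw [map_add, map_add, map_smul, map_smul, hi, hj, Module.End.pow_apply,
    Function.iterate_fixed hy, Module.End.one_apply]

theorem isLiftable_reflection : M.IsLiftable M.reflection := by
  intro i j
  rcases eq_or_ne i j with rfl | hij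
  · rw [M.diagonal, pow_one, reflection_mul_self]
  rcases eq_or_ne (M i j) 0 with h | h
  · rw [h, pow_zero]
  · exact M.reflection_mul_reflection_pow hij h

theorem reflection_apply_nonpos_of_edge {x : B →₀ ℝ} {b c : B} (hx : ∀ d, x d ≤ 0)
    (hxc : x c = 0) (hxb : x b ≤ -1) (hbc : M b c = 0 ∨ 3 ≤ M b c) :
    (∀ d, M.reflection c x d ≤ 0) ∧ M.reflection c x c ≤ -1 := by
  have hform : 1 / 2 ≤ M.rootForm c x := by
    have hterm : ∀ d ∈ x.support, 0 ≤ x d * M.formCoeff d c := by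
      intro d _
      rcases eq_or_ne d c with rfl | hdc
      · simp [hxc]
      · exact mul_nonneg_of_nonpos_of_nonpos (hx d) (M.formCoeff_nonpos hdc)
    have hb : b ∈ x.support := mem_support_iff.2 (by linarith)
    rw [rootForm_apply, Finsupp.sum]
    calc 1 / 2 ≤ x b * M.formCoeff b c := by nlinarith [M.formCoeff_le_neg_half hbc]
      _ ≤ _ := Finset.single_le_sum hterm hb
  refine ⟨fun d => ?_, by rw [reflection_apply_apply_self]; linarith⟩
  rcases eq_or_ne d c with rfl | hdc
  · rw [reflection_apply_apply_self]; linarith [hx d]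
  · rw [reflection_apply_apply_of_ne M hdc]; exact hx d

end CoxeterMatrix

namespace CoxeterSystem

variable {B W : Type*} [Group W] {M : CoxeterMatrix B} (cs : CoxeterSystem M W)

noncomputable def geometricRepresentation : W →* Module.End ℝ (B →₀ ℝ) :=
  cs.lift ⟨M.reflection, M.isLiftable_reflection⟩

@[simp] theorem geometricRepresentation_simple (i : B) :
    cs.geometricRepresentation (cs.simple i) = M.reflection i :=
  cs.lift_apply_simple M.isLiftable_reflection i

theorem geometricRepresentation_wordProd (ω : List B) :
    cs.geometricRepresentation (cs.wordProd ω) = (ω.map M.reflection).prod := by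
  simp [wordProd, map_list_prod, Function.comp_def]

def alternatingLengths (i j : B) (x : W) : Set ℕ :=
  {n | cs.wordProd (alternatingWord i j n) = x ∨ cs.wordProd (alternatingWord j i n) = x}

variable {cs}

theorem alternatingLengths_comm (i j : B) (x : W) :
    cs.alternatingLengths i j x = cs.alternatingLengths j i x :=
  Set.ext fun _ => or_comm

theorem zero_mem_alternatingLengths_one (i j : B) : 0 ∈ cs.alternatingLengths i j 1 :=
  Or.inl (by simp [alternatingWord])

theorem length_le_of_mem_alternatingLengths {i j : B} {x : W} {n : ℕ}
    (hn : n ∈ cs.alternatingLengths i j x) : cs.length x ≤ n := by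
  rcases hn with rfl | rfl <;> exact (cs.length_wordProd_le _).trans_eq (by simp)

theorem mem_alternatingLengths_inv {i j : B} {x : W} {n : ℕ}
    (hn : n ∈ cs.alternatingLengths i j x) : n ∈ cs.alternatingLengths i j x⁻¹ := by
  have key : ∀ a b,
      (cs.wordProd (alternatingWord a b n))⁻¹ = cs.wordProd (alternatingWord a b n) ∨
        (cs.wordProd (alternatingWord a b n))⁻¹ = cs.wordProd (alternatingWord b a n) := by
    intro a b
    rw [← wordProd_reverse, reverse_alternatingWord]
    split_ifs <;> simp
  rcases hn with rfl | rfl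
  · rcases key i j with h | h <;> simp [alternatingLengths, h]
  · rcases key j i with h | h <;> simp [alternatingLengths, h]

theorem wordProd_alternatingWord_mul_simple (i j : B) (n : ℕ) :
    cs.wordProd (alternatingWord i j n) * cs.simple i =
      cs.wordProd (alternatingWord j i (n + 1)) := by
  rw [alternatingWord_succ, wordProd_concat]

theorem wordProd_alternatingWord_succ_mul_simple (i j : B) (n : ℕ) :
    cs.wordProd (alternatingWord i j (n + 1)) * cs.simple j =
      cs.wordProd (alternatingWord j i n) := by
  rw [alternatingWord_succ, wordProd_concat, simple_mul_simple_cancel_right]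

theorem exists_mem_alternatingLengths_wordProd_mul_simple (i j : B) (n : ℕ) {c : B}
    (hc : c = i ∨ c = j) : ∃ n' ≤ n + 1,
      n' ∈ cs.alternatingLengths i j (cs.wordProd (alternatingWord i j n) * cs.simple c) := by
  rcases hc with rfl | rfl
  · exact ⟨n + 1, le_rfl, Or.inr (wordProd_alternatingWord_mul_simple c j n).symm⟩
  cases n with
  | zero => exact ⟨1, by omega, Or.inl (by simp [alternatingWord])⟩
  | succ p => exact ⟨p, by omega, Or.inr (wordProd_alternatingWord_succ_mul_simple i c p).symm⟩

theorem exists_mem_alternatingLengths_mul_simple {i j c : B} (hc : c = i ∨ c = j) {x : W}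
    {n : ℕ} (hn : n ∈ cs.alternatingLengths i j x) :
    ∃ n' ≤ n + 1, n' ∈ cs.alternatingLengths i j (x * cs.simple c) := by
  rcases hn with rfl | rfl
  · exact exists_mem_alternatingLengths_wordProd_mul_simple i j n hc
  · rw [alternatingLengths_comm]
    exact exists_mem_alternatingLengths_wordProd_mul_simple j i n hc.symm

theorem exists_mem_alternatingLengths_simple_mul {i j c : B} (hc : c = i ∨ c = j) {x : W}
    {n : ℕ} (hn : n ∈ cs.alternatingLengths i j x) :
    ∃ n' ≤ n + 1, n' ∈ cs.alternatingLengths i j (cs.simple c * x) := by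
  obtain ⟨n', hn', hmem⟩ := exists_mem_alternatingLengths_mul_simple hc
    (mem_alternatingLengths_inv hn)
  refine ⟨n', hn', ?_⟩
  simpa [cs.inv_simple] using mem_alternatingLengths_inv hmem

theorem exists_eq_mul_alternating_not_isRightDescent {i j : B} {w v x : W} {n : ℕ}
    (hn : n ∈ cs.alternatingLengths i j x) (hw : w = v * x)
    (hlen : cs.length w = cs.length v + n) :
    ∃ v x n, n ∈ cs.alternatingLengths i j x ∧ w = v * x ∧
      cs.length w = cs.length v + n ∧ ¬cs.IsRightDescent v i ∧ ¬cs.IsRightDescent v j := by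
  induction hN : cs.length v using Nat.strong_induction_on generalizing v x n with
  | _ N ih =>
  by_cases hdesc : ∃ c, (c = i ∨ c = j) ∧ cs.IsRightDescent v c
  · obtain ⟨c, hc, hvc⟩ := hdesc
    obtain ⟨n', hn', hmem⟩ := exists_mem_alternatingLengths_simple_mul hc hn
    have hw' : w = v * cs.simple c * (cs.simple c * x) := by
      rw [hw, mul_assoc, simple_mul_simple_cancel_left]
    have h₁ := hw' ▸ cs.length_mul_le (v * cs.simple c) (cs.simple c * x)
    have h₂ := length_le_of_mem_alternatingLengths hmem
    have h₃ := cs.length_mul_simple v c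
    unfold IsRightDescent at hvc
    exact ih _ (by omega) hmem hw' (by omega) rfl
  · push Not at hdesc
    exact ⟨v, x, n, hn, hw, hlen, hdesc i (Or.inl rfl), hdesc j (Or.inr rfl)⟩

theorem geometricRepresentation_apply_single_eq_of_mem_alternatingLengths {i j : B}
    (hij : i ≠ j) {x : W} {n : ℕ} (hn : n ∈ cs.alternatingLengths i j x)
    (hlen : cs.length x = n) (hx : ¬cs.IsRightDescent x i) :
    ∃ a b : ℝ, 0 ≤ a ∧ 0 ≤ b ∧
      cs.geometricRepresentation x (single i 1) = a • single i 1 + b • single j 1 := by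
  have hji : cs.wordProd (alternatingWord j i n) = x → n = 0 := by
    rintro rfl
    cases n with
    | zero => rfl
    | succ p =>
      refine absurd ?_ hx
      rw [IsRightDescent, wordProd_alternatingWord_succ_mul_simple, hlen]
      exact Nat.lt_succ_of_le
        ((cs.length_wordProd_le _).trans_eq (length_alternatingWord i j p))
  have hij' : cs.wordProd (alternatingWord i j n) = x := by
    rcases hn with h | h
    · exact h
    · obtain rfl := hji h
      simpa [alternatingWord] using h
  -- A reduced alternating word has length at most `m_ij`; at length `m_ij` the braid relation
  -- rewrites it as an alternating word ending in `i`.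
  have hnM : M i j = 0 ∨ n + 1 ≤ M i j := by
    by_contra! hcon
    have hred : cs.IsReduced (alternatingWord i j n) := by
      rw [IsReduced, hij', hlen, length_alternatingWord]
    have hle : n ≤ M i j := not_lt.1 fun h => cs.not_isReduced_alternatingWord i j hcon.1 h hred
    have hMn : M i j = n := by omega
    have hbraid := cs.wordProd_braidWord_eq i j
    rw [braidWord, braidWord, M.symmetric j i, hMn] at hbraid
    exact hcon.1 (hMn.trans (hji (by rw [← hbraid, hij'])))
  have hcoeff : ∀ r ≤ n + 1, 0 ≤ M.dihedralCoeff i j r := fun r hr =>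
    M.dihedralCoeff_nonneg hij (hnM.imp_right hr.trans)
  rw [← hij', geometricRepresentation_wordProd,
    M.prod_map_reflection_alternatingWord_apply_single]
  split_ifs
  · exact ⟨_, _, hcoeff _ le_rfl, hcoeff _ (by omega), rfl⟩
  · exact ⟨_, _, hcoeff _ (by omega), hcoeff _ le_rfl, rfl⟩

theorem geometricRepresentation_apply_single_nonneg {w : W} {i : B}
    (hw : ¬cs.IsRightDescent w i) (b : B) : 0 ≤ cs.geometricRepresentation w (single i 1) b := by
  induction hN : cs.length w using Nat.strong_induction_on generalizing w i b with
  | _ N ih =>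
  rcases eq_or_ne w 1 with rfl | hw1
  · by_cases h : i = b <;> simp [h]
  obtain ⟨j, hj⟩ := cs.exists_rightDescent_of_ne_one hw1
  have hij : i ≠ j := by rintro rfl; exact hw hj
  obtain ⟨v, x, n, hn, rfl, hlen, hvi, hvj⟩ := exists_eq_mul_alternating_not_isRightDescent
    (zero_mem_alternatingLengths_one i j) (mul_one w).symm rfl
  have hxn : cs.length x = n :=
    le_antisymm (length_le_of_mem_alternatingLengths hn) (by linarith [cs.length_mul_le v x])
  have hn0 : n ≠ 0 := by
    rintro rfl
    rw [cs.length_eq_zero_iff.1 hxn, mul_one] at hj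
    exact hvj hj
  have hx : ¬cs.IsRightDescent x i := by
    have h₁ := cs.length_mul_simple_ne (v * x) i
    have h₂ := mul_assoc v x (cs.simple i) ▸ cs.length_mul_le v (x * cs.simple i)
    unfold IsRightDescent at hw ⊢
    omega
  obtain ⟨a, c, ha, hc, hxi⟩ :=
    geometricRepresentation_apply_single_eq_of_mem_alternatingLengths hij hn hxn hx
  have hvi' := ih _ (by omega) hvi b rfl
  have hvj' := ih _ (by omega) hvj b rfl
  rw [map_mul, Module.End.mul_apply, hxi, map_add, map_smul, map_smul, Finsupp.add_apply,
    Finsupp.smul_apply, Finsupp.smul_apply, smul_eq_mul, smul_eq_mul]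
  positivity

theorem geometricRepresentation_apply_single_nonpos {w : W} {i : B}
    (hw : cs.IsRightDescent w i) (b : B) : cs.geometricRepresentation w (single i 1) b ≤ 0 := by
  have hwi : ¬cs.IsRightDescent (w * cs.simple i) i := by
    unfold IsRightDescent at hw ⊢
    rw [simple_mul_simple_cancel_right]
    exact not_lt.2 hw.le
  have := geometricRepresentation_apply_single_nonneg hwi b
  rw [map_mul, Module.End.mul_apply, geometricRepresentation_simple, M.reflection_single_self,
    map_neg, Finsupp.neg_apply] at this
  linarith

theorem geometricRepresentation_apply_apply_of_mem_closure {c : B} {u : W}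
    (hu : u ∈ Subgroup.closure (cs.simple '' {b | b ≠ c})) (y : B →₀ ℝ) :
    cs.geometricRepresentation u y c = y c := by
  induction hu using Subgroup.closure_induction_right generalizing y with
  | one => simp
  | mul_right x _ s hs ih | mul_inv_cancel x _ s hs ih =>
    obtain ⟨b, hb, rfl⟩ := hs
    simp only [inv_simple, map_mul, Module.End.mul_apply, geometricRepresentation_simple]
    rw [ih, M.reflection_apply_apply_of_ne (Ne.symm hb)]

variable (cs) in
theorem geometricRepresentation_path_apply_single_le {k : ℕ} (hk : 1 ≤ k) {t : ℕ → B}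
    (hinj : ∀ i j, 1 ≤ i → i ≤ k → 1 ≤ j → j ≤ k → t i = t j → i = j)
    (hlab : ∀ i, 1 ≤ i → i < k → (M (t i) (t (i + 1)) = 0 ∨ 3 ≤ M (t i) (t (i + 1)))) :
    cs.geometricRepresentation (((List.range k).map fun n => cs.simple (t (n + 1))).prod)⁻¹
      (single (t 1) 1) (t k) ≤ -1 := by
  obtain ⟨γ, hγ⟩ : ∃ γ : ℕ → B →₀ ℝ, ∀ i, γ i = cs.geometricRepresentation
      (((List.range i).map fun n => cs.simple (t (n + 1))).prod)⁻¹ (single (t 1) 1) :=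
    ⟨_, fun _ => rfl⟩
  have hγ₀ : γ 0 = single (t 1) 1 := by simp [hγ]
  have hγ_succ : ∀ i, γ (i + 1) = M.reflection (t (i + 1)) (γ i) := by
    simp [hγ, List.range_succ]
  suffices h : ∀ i, 1 ≤ i → i ≤ k → (∀ b, γ i b ≤ 0) ∧ γ i (t i) ≤ -1 ∧
      ∀ b, (∀ j, 1 ≤ j → j ≤ i → b ≠ t j) → γ i b = 0 by
    rw [← hγ]
    exact (h k hk le_rfl).2.1
  intro i
  induction i with
  | zero => omega
  | succ i ih =>
    intro _ hik
    rw [hγ_succ]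
    rcases Nat.eq_zero_or_pos i with rfl | hi
    · rw [hγ₀, M.reflection_single_self]
      refine ⟨fun b => ?_, by simp, fun b hb => ?_⟩
      · by_cases h : t 1 = b <;> simp [h]
      · simp [Ne.symm (hb 1 le_rfl le_rfl)]
    obtain ⟨hneg, hlast, hsupp⟩ := ih hi (by omega)
    have hnext := hsupp (t (i + 1)) fun j hj1 hji heq => by
      have := hinj j (i + 1) hj1 (by omega) (by omega) hik heq.symm
      omega
    obtain ⟨h₁, h₂⟩ := M.reflection_apply_nonpos_of_edge hneg hnext hlast (hlab i hi (by omega))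
    refine ⟨h₁, h₂, fun b hb => ?_⟩
    rw [M.reflection_apply_apply_of_ne (hb (i + 1) (by omega) le_rfl)]
    exact hsupp b fun j hj1 hji => hb j hj1 (by omega)

end CoxeterSystem

/-- Let `(W, S)` be a Coxeter system with Coxeter matrix `M` (where the
entry `0` encodes the label `∞`).  Let `t 1, …, t k` (`k ≥ 1`) be pairwise distinct
generators such that consecutive generators do not commute, i.e.
`M (t i) (t (i+1)) ≥ 3` or `= ∞`; thus `t 1, …, t k` is an embedded edge path in the
Coxeter diagram.  Set `g = t 1 ⋯ t k ∈ W`.  Then the coset `g · W_{S∖{t k}}` is disjoint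
from the standard parabolic subgroup `W_{S∖{t 1}}`. -/
theorem coset_disjoint_of_edge_path {B : Type*} {W : Type*} [Group W]
    (M : CoxeterMatrix B) (cs : CoxeterSystem M W)
    (k : ℕ) (hk : 1 ≤ k) (t : ℕ → B)
    (hinj : ∀ i j, 1 ≤ i → i ≤ k → 1 ≤ j → j ≤ k → t i = t j → i = j)
    (hlab : ∀ i, 1 ≤ i → i < k →
      (M (t i) (t (i + 1)) = 0 ∨ 3 ≤ M (t i) (t (i + 1)))) :
    (((List.range k).map (fun i => cs.simple (t (i + 1)))).prod •
        (Subgroup.closure (cs.simple '' {x : B | x ≠ t k}) : Set W)) ∩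
      (Subgroup.closure (cs.simple '' {x : B | x ≠ t 1}) : Set W) = ∅ := by
  rw [Set.eq_empty_iff_forall_notMem]
  rintro _ ⟨⟨v, hv, rfl⟩, hw⟩
  set g := ((List.range k).map fun i => cs.simple (t (i + 1))).prod
  have h₁ : cs.geometricRepresentation (g • v)⁻¹ (single (t 1) 1) (t 1) = 1 := by
    rw [cs.geometricRepresentation_apply_apply_of_mem_closure (inv_mem hw)]
    simp
  have h₂ : cs.geometricRepresentation (g • v)⁻¹ (single (t 1) 1) (t k) ≤ -1 := by
    rw [smul_eq_mul, mul_inv_rev, map_mul, Module.End.mul_apply,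
      cs.geometricRepresentation_apply_apply_of_mem_closure (inv_mem hv)]
    exact cs.geometricRepresentation_path_apply_single_le hk hinj hlab
  by_cases hd : cs.IsRightDescent (g • v)⁻¹ (t 1)
  · linarith [cs.geometricRepresentation_apply_single_nonpos hd (t 1)]
  · linarith [cs.geometricRepresentation_apply_single_nonneg hd (t k)]
end

section
/- Let P be a poset equipped with a strictly monotone rank function τ : P → ℤ taking values in {1, …, n} (so x < y implies τ(x) < τ(y)), such that every element of P lies below some element of rank n and above some element of rank 1. Call an element extremal if its rank is 1 or n. Suppose P is bowtie free and locally determined. Then every x ∈ P is the greatest lower bound of the set {z ∈ P : τ(z) = n and z ≥ x}, and the least upper bound of the set {z ∈ P : τ(z) = 1 and z ≤ x}. -/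
/-- An element of rank `1` or rank `n` is *extremal*. -/
def Extremal {P : Type*} (τ : P → ℤ) (n : ℤ) (x : P) : Prop := τ x = 1 ∨ τ x = n

/-- A poset `P` with strictly monotone rank function `τ` taking values in `{1, …, n}` is
*locally determined* if for every pair `x < y` there exists an extremal `y'` with `x < y'`
such that `y'` and `y` are incomparable, and an extremal `x'` with `x' < y` such that `x'`
and `x` are incomparable. -/
def LocallyDetermined {P : Type*} [PartialOrder P] (τ : P → ℤ) (n : ℤ) : Prop :=
  ∀ x y : P, x < y →
    (∃ y' : P, Extremal τ n y' ∧ x < y' ∧ ¬ y' ≤ y ∧ ¬ y ≤ y') ∧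
    (∃ x' : P, Extremal τ n x' ∧ x' < y ∧ ¬ x' ≤ x ∧ ¬ x ≤ x')


/-!
Suppose `w` lies below every top element above `x` but `w ≰ x`. Take a minimal common upper
bound `c` of `x` and `w`; then `x < c`, and local determinacy gives a top element `y'` above `x`
incomparable with `c`, so `x, w < c, y'` is a quasi-bowtie. Its center is a common upper bound
of `x` and `w` below `c`, hence equal to `c`, forcing `c ≤ y'`. The least-upper-bound half is
the order dual.
-/

theorem BowtieFree.dual {P : Type*} [PartialOrder P] (h : BowtieFree P) : BowtieFree Pᵒᵈ :=
  fun x₁ y₁ x₂ y₂ h₁₁ h₁₂ h₂₁ h₂₂ =>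
    let ⟨z, hx₁, hx₂, hy₁, hy₂⟩ := h y₁ x₁ y₂ x₂ h₁₁ h₂₁ h₁₂ h₂₂
    ⟨z, hy₁, hy₂, hx₁, hx₂⟩

theorem BowtieFree.isGLB_of_separating {P : Type*} [PartialOrder P] [WellFoundedLT P]
    (hbow : BowtieFree P) {T : Set P} (habove : ∀ x, ∃ z ∈ T, x ≤ z)
    (hsep : ∀ x c, x < c → ∃ y' ∈ T, x < y' ∧ ¬ y' ≤ c ∧ ¬ c ≤ y') (x : P) :
    IsGLB {z | z ∈ T ∧ x ≤ z} x := by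
  refine ⟨fun z hz => hz.2, fun w hw => ?_⟩
  by_contra hwx
  obtain ⟨z, hzT, hxz⟩ := habove x
  obtain ⟨c, ⟨hxc, hwc⟩, hmin⟩ :=
    wellFounded_lt.has_min {c | x ≤ c ∧ w ≤ c} ⟨z, hxz, hw ⟨hzT, hxz⟩⟩
  have hxc' : x < c := hxc.lt_of_ne (by rintro rfl; exact hwx hwc)
  obtain ⟨y', hy'T, hxy', hy'c, hcy'⟩ := hsep x c hxc'
  have hwy' : w ≤ y' := hw ⟨hy'T, hxy'.le⟩
  have hwc' : w < c := hwc.lt_of_ne (by rintro rfl; exact hcy' hwy')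
  have hwy'' : w < y' := hwy'.lt_of_ne (by rintro rfl; exact hy'c hwc)
  obtain ⟨d, hxd, hwd, hdc, hdy'⟩ := hbow x c w y' hxc' hxy' hwc' hwy''
  exact hcy' (hdc.eq_of_not_lt (hmin d ⟨hxd, hwd⟩) ▸ hdy')

section Ranked

variable {P : Type*} [PartialOrder P] {τ : P → ℤ} {n : ℤ}

theorem StrictMono.wellFoundedLT_of_forall_le (hmono : StrictMono τ) {a : ℤ}
    (hlo : ∀ p, a ≤ τ p) : WellFoundedLT P :=
  StrictMono.wellFoundedLT (f := fun p => (τ p - a).toNat) fun p q hpq => by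
    have := hmono hpq; have := hlo p; dsimp only; omega

theorem StrictMono.wellFoundedGT_of_forall_le (hmono : StrictMono τ) {b : ℤ}
    (hhi : ∀ p, τ p ≤ b) : WellFoundedGT P :=
  StrictAnti.wellFoundedGT (f := fun p => (b - τ p).toNat) fun p q hpq => by
    have := hmono hpq; have := hhi q; dsimp only; omega

theorem LocallyDetermined.exists_top (hld : LocallyDetermined τ n) (hmono : StrictMono τ)
    (hlo : ∀ p, 1 ≤ τ p) {x c : P} (hxc : x < c) :
    ∃ y' ∈ {z | τ z = n}, x < y' ∧ ¬ y' ≤ c ∧ ¬ c ≤ y' := by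
  obtain ⟨⟨y', hy'e, hxy', hy'c, hcy'⟩, -⟩ := hld x c hxc
  refine ⟨y', hy'e.resolve_left ?_, hxy', hy'c, hcy'⟩
  have := hmono hxy'; have := hlo x; omega

theorem LocallyDetermined.exists_bot (hld : LocallyDetermined τ n) (hmono : StrictMono τ)
    (hhi : ∀ p, τ p ≤ n) {c x : P} (hcx : c < x) :
    ∃ x' ∈ {z | τ z = 1}, x' < x ∧ ¬ c ≤ x' ∧ ¬ x' ≤ c := by
  obtain ⟨-, ⟨x', hx'e, hx'x, hx'c, hcx'⟩⟩ := hld c x hcx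
  refine ⟨x', hx'e.resolve_right ?_, hx'x, hcx', hx'c⟩
  have := hmono hx'x; have := hhi x; omega

end Ranked

/-- Let `P` be a poset with a strictly monotone rank function
`τ : P → ℤ` taking values in `{1, …, n}`, such that every element lies below some element
of rank `n` and above some element of rank `1`.  If `P` is bowtie free and locally
determined, then every `x ∈ P` is the greatest lower bound of
`{z : τ z = n ∧ x ≤ z}` and the least upper bound of `{z : τ z = 1 ∧ z ≤ x}`. -/
theorem locallyDetermined_glb_lub {P : Type*} [PartialOrder P] (n : ℤ) (τ : P → ℤ)
    (hmono : StrictMono τ) (hlo : ∀ p : P, 1 ≤ τ p) (hhi : ∀ p : P, τ p ≤ n)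
    (habove : ∀ x : P, ∃ z : P, τ z = n ∧ x ≤ z)
    (hbelow : ∀ x : P, ∃ z : P, τ z = 1 ∧ z ≤ x)
    (hbow : BowtieFree P) (hld : LocallyDetermined τ n) :
    ∀ x : P, IsGLB {z : P | τ z = n ∧ x ≤ z} x ∧ IsLUB {z : P | τ z = 1 ∧ z ≤ x} x := by
  have := hmono.wellFoundedLT_of_forall_le hlo
  have := hmono.wellFoundedGT_of_forall_le hhi
  intro x
  exact ⟨hbow.isGLB_of_separating habove (fun _ _ => hld.exists_top hmono hlo) x,
    hbow.dual.isGLB_of_separating (P := Pᵒᵈ) hbelow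
      (fun _ _ => hld.exists_bot hmono hhi) x⟩
end

section
/- Let P be a poset with a strictly monotone rank function τ : P → ℤ taking values in {1, …, N}; call an element extremal if its rank is 1 or N, and let d denote the graph distance in the comparability graph of P. Let ω = x_n, x_{n−1}, …, x_1 be a normal form path from x_n to x_1, and let ω′ = y_m, y_{m−1}, …, y_1 be a normal form path from y_m to y_1. Suppose x_1 = y_1 is extremal, n ≤ m, and x_n and y_m are adjacent in the comparability graph. Then either xᵢ ≤ yᵢ for all 1 ≤ i ≤ n, or xᵢ ≥ yᵢ for all 1 ≤ i ≤ n. -/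
/-- The *comparability graph* of a poset: two distinct elements are adjacent if and only
if they are comparable. -/
def comparabilityGraph (P : Type*) [PartialOrder P] : SimpleGraph P where
  Adj x y := x ≠ y ∧ (x ≤ y ∨ y ≤ x)
  symm := by
    constructor
    intro x y h
    exact ⟨h.1.symm, h.2.symm⟩
  loopless := by
    constructor
    intro x h
    exact h.1 rfl

/-- `f ℓ, f (ℓ-1), …, f 1` is a *normal form path* from `f ℓ` to `f 1`: consecutive
vertices are adjacent in the comparability graph, the path is a geodesic, and for every
`i ≥ 2` and every vertex `y` adjacent to `f i` with `d (y, f 1) = i − 2`, either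
`f i < f (i-1) ≤ y` or `f i > f (i-1) ≥ y`. -/
def IsNormalFormPath {P : Type*} [PartialOrder P] (f : ℕ → P) (ℓ : ℕ) : Prop :=
  1 ≤ ℓ ∧
  (∀ i, 1 ≤ i → i < ℓ → (comparabilityGraph P).Adj (f (i + 1)) (f i)) ∧
  (comparabilityGraph P).dist (f ℓ) (f 1) = ℓ - 1 ∧
  (∀ i, 2 ≤ i → i ≤ ℓ → ∀ y : P, (comparabilityGraph P).Adj y (f i) →
    (comparabilityGraph P).dist y (f 1) = i - 2 →
    ((f i < f (i - 1) ∧ f (i - 1) ≤ y) ∨ (f (i - 1) < f i ∧ y ≤ f (i - 1))))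

/-!
Along a normal form path the distance to the base drops by exactly one at each step, so
`f i` and `f (i + 2)` are incomparable and the edges alternate between going up and going down.
Since the common base is extremal, the first edges of both paths point the same way, hence so
do all edges at the same level. The normal form condition then pushes a comparison
`x (i + 1) ≤ y (i + 1)` down to `x i ≤ y i`, and the adjacency of the top vertices (together
with `m ≤ n + 1`) provides the comparison at level `n` to start from.
-/

section ComparabilityGraph

variable {P : Type*} [PartialOrder P] {a b c : P}

theorem comparabilityGraph_adj_iff : (comparabilityGraph P).Adj a b ↔ a < b ∨ b < a := by
  simp only [comparabilityGraph, ne_eq, lt_iff_le_and_ne]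
  grind

theorem lt_iff_not_gt_of_comparabilityGraph_adj (h : (comparabilityGraph P).Adj a b) :
    a < b ↔ ¬b < a :=
  ⟨fun hab => hab.asymm, fun hba => (comparabilityGraph_adj_iff.1 h).resolve_right hba⟩

theorem lt_iff_lt_of_isMin_or_isMax (ha : IsMin a ∨ IsMax a)
    (hb : (comparabilityGraph P).Adj a b) (hc : (comparabilityGraph P).Adj a c) :
    a < b ↔ a < c := by
  rcases ha with ha | ha
  · exact iff_of_true ((comparabilityGraph_adj_iff.1 hb).resolve_right ha.not_lt)
      ((comparabilityGraph_adj_iff.1 hc).resolve_right ha.not_lt)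
  · exact iff_of_false ha.not_lt ha.not_lt

end ComparabilityGraph

theorem SimpleGraph.exists_walk_of_adj_succ {V : Type*} {G : SimpleGraph V} {f : ℕ → V}
    {j k : ℕ} (hadj : ∀ i, j ≤ i → i < k → G.Adj (f (i + 1)) (f i)) (hjk : j ≤ k) :
    ∃ p : G.Walk (f k) (f j), p.length = k - j := by
  induction k, hjk using Nat.le_induction with
  | base => exact ⟨.nil, by simp⟩
  | succ k hjk ih =>
    obtain ⟨p, hp⟩ := ih fun i hji hik => hadj i hji (by omega)
    exact ⟨.cons (hadj k hjk (by omega)) p, by simp only [Walk.length_cons]; omega⟩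

namespace IsNormalFormPath

variable {P : Type*} [PartialOrder P] {f x y : ℕ → P} {ℓ n m i : ℕ} {z : P}

theorem adj (hf : IsNormalFormPath f ℓ) (hi : 1 ≤ i) (hiℓ : i < ℓ) :
    (comparabilityGraph P).Adj (f (i + 1)) (f i) :=
  hf.2.1 i hi hiℓ

theorem dist_eq (hf : IsNormalFormPath f ℓ) (hi : 1 ≤ i) (hiℓ : i ≤ ℓ) :
    (comparabilityGraph P).dist (f i) (f 1) = i - 1 := by
  obtain ⟨-, hadj, hgeo, -⟩ := hf
  obtain ⟨p, hp⟩ := SimpleGraph.exists_walk_of_adj_succ (G := comparabilityGraph P)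
    (fun k h1 hk => hadj k h1 (by omega)) hi
  obtain ⟨q, hq⟩ := SimpleGraph.exists_walk_of_adj_succ (G := comparabilityGraph P)
    (fun k h1 hk => hadj k (by omega) hk) hiℓ
  have hle := SimpleGraph.dist_le p
  have hqle := SimpleGraph.dist_le q
  have htri := (SimpleGraph.Walk.reachable p).dist_triangle_right (f ℓ)
  omega

theorem not_adj_add_two (hf : IsNormalFormPath f ℓ) (hi : 1 ≤ i) (hiℓ : i + 2 ≤ ℓ) :
    ¬(comparabilityGraph P).Adj (f (i + 2)) (f i) := fun h => by
  have htri := h.reachable.dist_triangle_left (f 1)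
  rw [SimpleGraph.dist_eq_one_iff_adj.2 h, hf.dist_eq hi (by omega),
    hf.dist_eq (by omega) hiℓ] at htri
  omega

theorem lt_succ_iff_add_two_lt_succ (hf : IsNormalFormPath f ℓ) (hi : 1 ≤ i)
    (hiℓ : i + 2 ≤ ℓ) : f i < f (i + 1) ↔ f (i + 2) < f (i + 1) := by
  have hinc := hf.not_adj_add_two hi hiℓ
  rw [comparabilityGraph_adj_iff] at hinc
  have hnext := comparabilityGraph_adj_iff.1 (hf.adj (i := i + 1) (by omega) (by omega))
  have hprev := comparabilityGraph_adj_iff.1 (hf.adj hi (by omega))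
  constructor
  · exact fun hup => hnext.resolve_right fun h => hinc (.inr (hup.trans h))
  · exact fun hdown => hprev.resolve_left fun h => hinc (.inl (hdown.trans h))

theorem lt_succ_iff_lt_succ_of_base (hx : IsNormalFormPath x n) (hy : IsNormalFormPath y m)
    (hbase : x 1 < x 2 ↔ y 1 < y 2) (hi : 1 ≤ i) (hin : i < n) (him : i < m) :
    x i < x (i + 1) ↔ y i < y (i + 1) := by
  induction i, hi using Nat.le_induction with
  | base => exact hbase
  | succ i hi ih =>
    rw [lt_iff_not_gt_of_comparabilityGraph_adj (hx.adj (by omega) hin).symm,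
      lt_iff_not_gt_of_comparabilityGraph_adj (hy.adj (by omega) him).symm,
      ← hx.lt_succ_iff_add_two_lt_succ hi hin, ← hy.lt_succ_iff_add_two_lt_succ hi him,
      ih (by omega) (by omega)]

theorem le_of_lt_succ (hf : IsNormalFormPath f ℓ) (hi : 1 ≤ i) (hiℓ : i < ℓ)
    (hup : f i < f (i + 1)) (hz : z < f (i + 1))
    (hd : (comparabilityGraph P).dist z (f 1) = i - 1) : z ≤ f i := by
  obtain ⟨-, -, -, hnormal⟩ := hf
  have := hnormal (i + 1) (by omega) hiℓ z (comparabilityGraph_adj_iff.2 (.inl hz)) (by omega)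
  simp only [Nat.add_sub_cancel] at this
  rcases this with ⟨hdown, -⟩ | ⟨-, hle⟩
  · exact absurd hdown hup.asymm
  · exact hle

theorem le_of_succ_lt (hf : IsNormalFormPath f ℓ) (hi : 1 ≤ i) (hiℓ : i < ℓ)
    (hdown : f (i + 1) < f i) (hz : f (i + 1) < z)
    (hd : (comparabilityGraph P).dist z (f 1) = i - 1) : f i ≤ z := by
  obtain ⟨-, -, -, hnormal⟩ := hf
  have := hnormal (i + 1) (by omega) hiℓ z (comparabilityGraph_adj_iff.2 (.inr hz)) (by omega)
  simp only [Nat.add_sub_cancel] at this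
  rcases this with ⟨-, hle⟩ | ⟨hup, -⟩
  · exact hle
  · exact absurd hup hdown.asymm

theorem le_of_succ_le_succ (hx : IsNormalFormPath x n) (hy : IsNormalFormPath y m)
    (hbase : x 1 = y 1) (hi : 1 ≤ i) (hin : i < n) (him : i < m)
    (hdir : x i < x (i + 1) ↔ y i < y (i + 1)) (hle : x (i + 1) ≤ y (i + 1)) : x i ≤ y i := by
  rcases comparabilityGraph_adj_iff.1 (hx.adj hi hin) with hxdown | hxup
  · have hydown : y (i + 1) < y i :=
      (lt_iff_not_gt_of_comparabilityGraph_adj (hy.adj hi him)).2 (mt hdir.2 hxdown.asymm)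
    refine hx.le_of_succ_lt hi hin hxdown (hle.trans_lt hydown) ?_
    rw [hbase, hy.dist_eq hi him.le]
  · refine hy.le_of_lt_succ hi him (hdir.1 hxup) (hxup.trans_le hle) ?_
    rw [← hbase, hx.dist_eq hi hin.le]

theorem le_of_le_of_lt_succ_iff {k : ℕ} (hx : IsNormalFormPath x n) (hy : IsNormalFormPath y m)
    (hbase : x 1 = y 1) (hkn : k ≤ n) (hkm : k ≤ m)
    (hdir : ∀ i, 1 ≤ i → i < k → (x i < x (i + 1) ↔ y i < y (i + 1))) (htop : x k ≤ y k) :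
    ∀ i, 1 ≤ i → i ≤ k → x i ≤ y i := fun i hi hik =>
  Nat.decreasingInduction (motive := fun i _ => 1 ≤ i → x i ≤ y i)
    (fun j hjk ih hj => hx.le_of_succ_le_succ hy hbase hj (by omega) (by omega)
      (hdir j hj hjk) (ih (by omega)))
    (fun _ => htop) hik hi

theorem le_or_le_of_adj (hx : IsNormalFormPath x n) (hy : IsNormalFormPath y m)
    (hbase : x 1 = y 1) (hnm : n ≤ m) (htop : (comparabilityGraph P).Adj (x n) (y m)) :
    x n ≤ y n ∨ y n ≤ x n := by
  have hn : 1 ≤ n := hx.1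
  have hxn : (comparabilityGraph P).dist (x n) (y 1) = n - 1 := hbase ▸ hx.dist_eq hn le_rfl
  obtain ⟨-, -, hygeo, hynormal⟩ := hy
  have htri := htop.symm.reachable.dist_triangle_left (y 1)
  rw [SimpleGraph.dist_eq_one_iff_adj.2 htop.symm, hxn, hygeo] at htri
  obtain rfl | rfl : m = n ∨ m = n + 1 := by omega
  · exact htop.2
  · have := hynormal (n + 1) (by omega) le_rfl (x n) htop (by omega)
    simp only [Nat.add_sub_cancel] at this
    exact this.elim (fun h => .inr h.2) (fun h => .inl h.2)

end IsNormalFormPath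

/-- Let `P` be a poset with a strictly monotone rank function
`τ : P → ℤ` taking values in `{1, …, N}` (extremal means rank `1` or `N`).  Let
`ω = x n, …, x 1` and `ω' = y m, …, y 1` be normal form paths with `x 1 = y 1` extremal,
`n ≤ m`, and `x n`, `y m` adjacent in the comparability graph.  Then either `x i ≤ y i`
for all `1 ≤ i ≤ n`, or `x i ≥ y i` for all `1 ≤ i ≤ n`. -/
theorem normalFormPath_strip {P : Type*} [PartialOrder P] (N : ℤ) (τ : P → ℤ)
    (hmono : StrictMono τ) (hlo : ∀ p : P, 1 ≤ τ p) (hhi : ∀ p : P, τ p ≤ N)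
    (x y : ℕ → P) (n m : ℕ)
    (hx : IsNormalFormPath x n) (hy : IsNormalFormPath y m)
    (hbase : x 1 = y 1) (hext : τ (x 1) = 1 ∨ τ (x 1) = N)
    (hnm : n ≤ m)
    (htop : (comparabilityGraph P).Adj (x n) (y m)) :
    (∀ i, 1 ≤ i → i ≤ n → x i ≤ y i) ∨ (∀ i, 1 ≤ i → i ≤ n → y i ≤ x i) := by
  have hextremal : IsMin (x 1) ∨ IsMax (x 1) := hext.imp
    (fun (h : τ (x 1) = 1) => isMin_iff_forall_not_lt.2 fun p hp => (hmono hp).not_ge (h ▸ hlo p))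
    (fun (h : τ (x 1) = N) => isMax_iff_forall_not_lt.2 fun p hp => (hmono hp).not_ge (h ▸ hhi p))
  have hdir : ∀ i, 1 ≤ i → i < n → (x i < x (i + 1) ↔ y i < y (i + 1)) := by
    intro i hi hin
    refine hx.lt_succ_iff_lt_succ_of_base hy ?_ hi hin (hin.trans_le hnm)
    have hy2 := (hy.adj le_rfl (by omega)).symm
    rw [← hbase] at hy2 ⊢
    exact lt_iff_lt_of_isMin_or_isMax hextremal (hx.adj le_rfl (by omega)).symm hy2
  rcases hx.le_or_le_of_adj hy hbase hnm htop with hle | hle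
  · exact .inl (hx.le_of_le_of_lt_succ_iff hy hbase le_rfl hnm hdir hle)
  · exact .inr (hy.le_of_le_of_lt_succ_iff hx hbase.symm hnm le_rfl
      (fun i hi hin => (hdir i hi hin).symm) hle)
end

section
/- Let P be a poset with a strictly monotone rank function τ : P → ℤ taking values in {1, …, N}; call an element extremal if its rank is 1 or N, and let d denote the graph distance in the comparability graph of P. Let z be an extremal element such that for every element v of P there exists a normal form path from v to z. Let x₁, x₂, …, x_k be a local normal form path from x₁ to x_k. Then the function f(i) = d(z, xᵢ) first weakly decreases and then strictly increases: there exists an index j with 1 ≤ j ≤ k such that f(i) ≥ f(i+1) whenever 1 ≤ i < j, and f(i) < f(i+1) whenever j ≤ i < k. -/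
/-- `f 1, f 2, …, f k` is an *up-down path*: consecutive elements are adjacent in the
comparability graph and the comparisons alternate. -/
def IsUpDownPath {P : Type*} [PartialOrder P] (f : ℕ → P) (k : ℕ) : Prop :=
  1 ≤ k ∧
  (∀ i, 1 ≤ i → i < k → (comparabilityGraph P).Adj (f i) (f (i + 1))) ∧
  (∀ i, 2 ≤ i → i < k →
    ((f (i - 1) < f i → f (i + 1) < f i) ∧ (f i < f (i - 1) → f i < f (i + 1))))

/-- `f 1, f 2, …, f k` is a *local normal form path* from `f 1` to `f k`. -/
def IsLocalNormalFormPath {P : Type*} [PartialOrder P] (f : ℕ → P) (k : ℕ) : Prop :=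
  IsUpDownPath f k ∧
  (∀ i, 2 ≤ i → i < k →
    ((f (i - 1) < f i ∧ f (i + 1) < f i →
      ¬ ∃ a₂ a₃ : P, a₂ < f i ∧ a₃ < f i ∧ f (i - 1) ≤ a₂ ∧ a₃ ≤ a₂ ∧ a₃ ≤ f (i + 1)) ∧
     (f i < f (i - 1) ∧ f i < f (i + 1) →
      ¬ ∃ a₂ a₃ : P, f i < a₂ ∧ f i < a₃ ∧ a₂ ≤ f (i - 1) ∧ a₂ ≤ a₃ ∧ f (i + 1) ≤ a₃)))

/-!
Distances to an extremal vertex `z` orient the comparability graph. Along a geodesic leaving `z`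
the comparisons alternate, since a chain `p < u < v` would be a shortcut; and all neighbours of `z`
lie on the same side of it. Hence whether an edge climbing from distance `m - 1` to distance `m`
goes up or down depends only on `m`.

Let `a, v, c` be consecutive on the local normal form path with `d(z, a) < d(z, v)`, say
`a < v > c`, and suppose `d(z, c) ≤ d(z, v)`. The last step `q` of a normal form path from `v` to
`z` satisfies `a ≤ q < v`. One level below `v` there is some `y < v` with `y ≤ c`: `c` itself, or
by the orientation rule a neighbour of `c` one level below it. The normal form condition at `v`
gives `y ≤ q`, so `q, y` contradict local normality at `v`. Hence once `d(z, x i)` increases it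
keeps increasing.
-/

namespace SimpleGraph

variable {V : Type*} {G : SimpleGraph V}

theorem exists_walk_length_of_adj_succ (f : ℕ → V) {a b : ℕ} (hab : a ≤ b)
    (h : ∀ i, a ≤ i → i < b → G.Adj (f (i + 1)) (f i)) :
    ∃ w : G.Walk (f b) (f a), w.length = b - a := by
  induction b, hab using Nat.le_induction with
  | base => exact ⟨.nil, by simp⟩
  | succ n hn ih =>
    obtain ⟨w, hw⟩ := ih fun i hi hin => h i hi (by omega)
    exact ⟨.cons (h n hn (by omega)) w, by simp only [Walk.length_cons, hw]; omega⟩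

theorem exists_adj_dist_add_one {u v : V} (h : G.dist u v ≠ 0) :
    ∃ w, G.Adj w v ∧ G.dist u w + 1 = G.dist u v := by
  obtain ⟨p, hp⟩ := G.exists_walk_of_dist_ne_zero (G.dist_comm ▸ h : G.dist v u ≠ 0)
  cases p with
  | nil => exact absurd (G.dist_comm ▸ hp.symm) h
  | cons hvw q =>
    refine ⟨_, hvw.symm, ?_⟩
    have hq := G.dist_le q
    rw [Walk.length_cons, G.dist_comm] at hp
    rw [G.dist_comm] at hq
    have := hvw.diff_dist_adj (u := u)
    omega

theorem eq_of_dist_eq_zero_of_adj {z u v : V} (hu : G.dist z u = 0) (huv : G.Adj u v)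
    (hv : G.dist z v ≠ 0) : z = u :=
  ((Reachable.of_dist_ne_zero hv).trans huv.symm.reachable).dist_eq_zero_iff.1 hu

end SimpleGraph

theorem isMin_or_isMax_of_apply_eq {P α : Type*} [PartialOrder P] [Preorder α] {τ : P → α}
    (hτ : StrictMono τ) {lo hi : α} (hlo : ∀ p, lo ≤ τ p) (hhi : ∀ p, τ p ≤ hi) {z : P}
    (hz : τ z = lo ∨ τ z = hi) : IsMin z ∨ IsMax z := by
  rcases hz with hz | hz
  · exact .inl <| isMin_iff_forall_not_lt.2 fun p hp => (hτ hp).not_ge (hz ▸ hlo p)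
  · exact .inr <| isMax_iff_forall_not_lt.2 fun p hp => (hτ hp).not_ge (hz ▸ hhi p)

theorem exists_le_then_lt_of_lt_imp_lt {α : Type*} [LinearOrder α] (d : ℕ → α) {k : ℕ}
    (hk : 1 ≤ k) (h : ∀ i, 1 ≤ i → i + 1 < k → d i < d (i + 1) → d (i + 1) < d (i + 2)) :
    ∃ j, 1 ≤ j ∧ j ≤ k ∧ (∀ i, 1 ≤ i → i < j → d (i + 1) ≤ d i) ∧
      (∀ i, j ≤ i → i < k → d i < d (i + 1)) := by
  classical
  by_cases hex : ∃ i, 1 ≤ i ∧ i < k ∧ d i < d (i + 1)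
  · obtain ⟨hj, hjk, hlt⟩ := Nat.find_spec hex
    refine ⟨Nat.find hex, hj, hjk.le, fun i hi hij => ?_, fun i hji hik => ?_⟩
    · exact not_lt.1 fun hlt' => Nat.find_min hex hij ⟨hi, by omega, hlt'⟩
    · induction i, hji using Nat.le_induction with
      | base => exact hlt
      | succ n hn ih => exact h n (by omega) hik (ih (by omega))
  · push Not at hex
    exact ⟨k, hk, le_rfl, fun i hi hik => hex i hi hik, fun i hki hik => by omega⟩

namespace comparabilityGraph

variable {P : Type*} [PartialOrder P]

local notation "Γ" => comparabilityGraph P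

theorem adj_iff_lt_or_gt {x y : P} : (Γ).Adj x y ↔ x < y ∨ y < x := by
  simp only [comparabilityGraph, lt_iff_le_and_ne, ne_comm (a := y)]
  tauto

theorem adj_of_lt {x y : P} (h : x < y) : (Γ).Adj x y := adj_iff_lt_or_gt.2 (.inl h)

theorem lt_iff_gt_of_not_adj {p u v : P} (hpu : (Γ).Adj p u) (huv : (Γ).Adj u v)
    (hpv : ¬ (Γ).Adj p v) : p < u ↔ v < u := by
  rcases adj_iff_lt_or_gt.1 hpu with hpu | hup <;> rcases adj_iff_lt_or_gt.1 huv with huv | hvu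
  · exact absurd (adj_of_lt (hpu.trans huv)) hpv
  · exact iff_of_true hpu hvu
  · exact iff_of_false hup.not_gt huv.not_gt
  · exact absurd (adj_of_lt (hvu.trans hup)).symm hpv

theorem not_lt_iff_lt_of_adj {u v : P} (h : (Γ).Adj u v) : ¬ u < v ↔ v < u := by
  rcases adj_iff_lt_or_gt.1 h with h | h
  · exact iff_of_false (not_not.2 h) h.not_gt
  · exact iff_of_true h.not_gt h

theorem lt_iff_lt_of_adj_of_isMin_or_isMax {z v v' : P} (hz : IsMin z ∨ IsMax z)
    (hv : (Γ).Adj z v) (hv' : (Γ).Adj z v') : z < v ↔ z < v' := by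
  rcases hz with hz | hz
  · exact iff_of_true ((not_lt_iff_lt_of_adj hv.symm).1 hz.not_lt)
      ((not_lt_iff_lt_of_adj hv'.symm).1 hz.not_lt)
  · exact iff_of_false hz.not_lt hz.not_lt

theorem lt_iff_gt_of_dist_add_two {z p u v : P} (hpu : (Γ).Adj p u) (huv : (Γ).Adj u v)
    (h : (Γ).dist z v = (Γ).dist z p + 2) : p < u ↔ v < u :=
  lt_iff_gt_of_not_adj hpu huv fun hpv => by have := hpv.diff_dist_adj (u := z); omega

theorem lt_iff_lt_of_dist_eq {z : P} (hz : IsMin z ∨ IsMax z) {u v u' v' : P}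
    (huv : (Γ).Adj u v) (hu'v' : (Γ).Adj u' v') (hd : (Γ).dist z u + 1 = (Γ).dist z v)
    (hd' : (Γ).dist z u' + 1 = (Γ).dist z v') (hvv' : (Γ).dist z v = (Γ).dist z v') :
    u < v ↔ u' < v' := by
  induction h : (Γ).dist z u generalizing u v u' v' with
  | zero =>
    obtain rfl := SimpleGraph.eq_of_dist_eq_zero_of_adj h huv (by omega)
    obtain rfl := SimpleGraph.eq_of_dist_eq_zero_of_adj (z := z) (u := u') (by omega) hu'v'
      (by omega)
    exact lt_iff_lt_of_adj_of_isMin_or_isMax hz huv hu'v'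
  | succ n ih =>
    obtain ⟨p, hpu, hp⟩ := SimpleGraph.exists_adj_dist_add_one
      (show (Γ).dist z u ≠ 0 by omega)
    obtain ⟨p', hp'u', hp'⟩ := SimpleGraph.exists_adj_dist_add_one
      (show (Γ).dist z u' ≠ 0 by omega)
    rw [← not_iff_not, not_lt_iff_lt_of_adj huv, not_lt_iff_lt_of_adj hu'v',
      ← lt_iff_gt_of_dist_add_two (z := z) hpu huv (by omega),
      ← lt_iff_gt_of_dist_add_two (z := z) hp'u' hu'v' (by omega)]
    exact ih hpu hp'u' hp hp' (by omega) (by omega)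

theorem exists_adj_of_isNormalFormPath {z v : P}
    (hnf : ∃ (f : ℕ → P) (ℓ : ℕ), IsNormalFormPath f ℓ ∧ f ℓ = v ∧ f 1 = z)
    (hv : (Γ).dist z v ≠ 0) :
    ∃ q, (Γ).Adj q v ∧ (Γ).dist z q + 1 = (Γ).dist z v ∧ ∀ y, (Γ).Adj y v →
      (Γ).dist z y + 1 = (Γ).dist z v → (v < q ∧ q ≤ y) ∨ (q < v ∧ y ≤ q) := by
  obtain ⟨f, ℓ, ⟨-, hadj, hgeo, hnormal⟩, rfl, rfl⟩ := hnf
  rw [SimpleGraph.dist_comm] at hgeo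
  have hℓ : ℓ - 1 + 1 = ℓ := by omega
  have hq : (Γ).Adj (f (ℓ - 1)) (f ℓ) := (hℓ ▸ hadj (ℓ - 1) (by omega) (by omega)).symm
  obtain ⟨w, hw⟩ := SimpleGraph.exists_walk_length_of_adj_succ f (a := 1) (b := ℓ - 1) (by omega)
    fun i hi hiℓ => hadj i hi (by omega)
  have hqz := (Γ).dist_le w
  have := hq.diff_dist_adj (u := f 1)
  rw [SimpleGraph.dist_comm] at hqz
  refine ⟨f (ℓ - 1), hq, by omega, fun y hy hyd => ?_⟩
  exact hnormal ℓ (by omega) le_rfl y hy (by rw [SimpleGraph.dist_comm]; omega)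

variable {z : P} (hz : IsMin z ∨ IsMax z)
  (hnf : ∀ v : P, ∃ (f : ℕ → P) (ℓ : ℕ), IsNormalFormPath f ℓ ∧ f ℓ = v ∧ f 1 = z)
include hz hnf

theorem dist_lt_of_peak {a v c : P} (hav : a < v) (hcv : c < v)
    (hclosed : ¬ ∃ a₂ a₃ : P, a₂ < v ∧ a₃ < v ∧ a ≤ a₂ ∧ a₃ ≤ a₂ ∧ a₃ ≤ c)
    (hd : (Γ).dist z a < (Γ).dist z v) : (Γ).dist z v < (Γ).dist z c := by
  by_contra! hc
  have hva : (Γ).dist z a + 1 = (Γ).dist z v := by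
    have := (adj_of_lt hav).diff_dist_adj (u := z); omega
  obtain ⟨q, -, -, hq⟩ := exists_adj_of_isNormalFormPath (hnf v) (by omega)
  obtain ⟨hqv, haq⟩ : q < v ∧ a ≤ q :=
    (hq a (adj_of_lt hav) hva).resolve_left fun h => (h.1.trans_le h.2).asymm hav
  obtain ⟨y, hyv, hyd, hyc⟩ : ∃ y, y < v ∧ (Γ).dist z y + 1 = (Γ).dist z v ∧ y ≤ c := by
    have := (adj_of_lt hcv).diff_dist_adj (u := z)
    by_cases hcd : (Γ).dist z c + 1 = (Γ).dist z v
    · exact ⟨c, hcv, hcd, le_rfl⟩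
    obtain ⟨w, hw, hwd⟩ := SimpleGraph.exists_adj_dist_add_one (show (Γ).dist z c ≠ 0 by omega)
    have hwc : w < c := (lt_iff_lt_of_dist_eq hz (adj_of_lt hav) hw hva hwd (by omega)).1 hav
    exact ⟨w, hwc.trans hcv, by omega, hwc.le⟩
  have hyq : y ≤ q := ((hq y (adj_of_lt hyv) hyd).resolve_left fun h => h.1.asymm hqv).2
  exact hclosed ⟨q, y, hqv, hyv, haq, hyq, hyc⟩

theorem dist_lt_of_valley {a v c : P} (hva : v < a) (hvc : v < c)
    (hclosed : ¬ ∃ a₂ a₃ : P, v < a₂ ∧ v < a₃ ∧ a₂ ≤ a ∧ a₂ ≤ a₃ ∧ c ≤ a₃)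
    (hd : (Γ).dist z a < (Γ).dist z v) : (Γ).dist z v < (Γ).dist z c := by
  by_contra! hc
  have had : (Γ).dist z a + 1 = (Γ).dist z v := by
    have := (adj_of_lt hva).symm.diff_dist_adj (u := z); omega
  obtain ⟨q, -, -, hq⟩ := exists_adj_of_isNormalFormPath (hnf v) (by omega)
  obtain ⟨hvq, hqa⟩ : v < q ∧ q ≤ a :=
    (hq a (adj_of_lt hva).symm had).resolve_right fun h => (h.2.trans_lt h.1).asymm hva
  obtain ⟨y, hvy, hyd, hcy⟩ : ∃ y, v < y ∧ (Γ).dist z y + 1 = (Γ).dist z v ∧ c ≤ y := by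
    have := (adj_of_lt hvc).symm.diff_dist_adj (u := z)
    by_cases hcd : (Γ).dist z c + 1 = (Γ).dist z v
    · exact ⟨c, hvc, hcd, le_rfl⟩
    obtain ⟨w, hw, hwd⟩ := SimpleGraph.exists_adj_dist_add_one (show (Γ).dist z c ≠ 0 by omega)
    have hcw : c < w := (not_lt_iff_lt_of_adj hw).1 fun hwc =>
      hva.asymm ((lt_iff_lt_of_dist_eq hz (adj_of_lt hva).symm hw had hwd (by omega)).2 hwc)
    exact ⟨w, hvc.trans hcw, by omega, hcw.le⟩
  have hqy : q ≤ y := ((hq y (adj_of_lt hvy).symm hyd).resolve_right fun h => h.1.asymm hvq).2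
  exact hclosed ⟨q, y, hvq, hvy, hqa, hqy, hcy⟩

end comparabilityGraph

/-- **Bestvina-type inequality.** Let `P` be a poset with a strictly
monotone rank function `τ` taking values in `{1, …, N}`, let `z` be an extremal element
such that every element of `P` is joined to `z` by a normal form path, and let
`x 1, …, x k` be a local normal form path.  Then `i ↦ d (z, x i)` first weakly decreases
and then strictly increases. -/
theorem localNormalForm_dist_unimodal {P : Type*} [PartialOrder P] (N : ℤ) (τ : P → ℤ)
    (hmono : StrictMono τ) (hlo : ∀ p : P, 1 ≤ τ p) (hhi : ∀ p : P, τ p ≤ N)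
    (z : P) (hz : τ z = 1 ∨ τ z = N)
    (hnf : ∀ v : P, ∃ (f : ℕ → P) (ℓ : ℕ), IsNormalFormPath f ℓ ∧ f ℓ = v ∧ f 1 = z)
    (x : ℕ → P) (k : ℕ) (hx : IsLocalNormalFormPath x k) :
    ∃ j : ℕ, 1 ≤ j ∧ j ≤ k ∧
      (∀ i, 1 ≤ i → i < j →
        (comparabilityGraph P).dist z (x (i + 1)) ≤ (comparabilityGraph P).dist z (x i)) ∧
      (∀ i, j ≤ i → i < k →
        (comparabilityGraph P).dist z (x i) < (comparabilityGraph P).dist z (x (i + 1))) := by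
  have hext := isMin_or_isMax_of_apply_eq hmono hlo hhi hz
  obtain ⟨⟨hk, hadj, hupDown⟩, hclosed⟩ := hx
  refine exists_le_then_lt_of_lt_imp_lt (fun i => (comparabilityGraph P).dist z (x i)) hk
    fun i hi hik hlt => ?_
  have hupDown := hupDown (i + 1) (by omega) hik
  have hclosed := hclosed (i + 1) (by omega) hik
  simp only [Nat.add_sub_cancel] at hupDown hclosed
  rcases comparabilityGraph.adj_iff_lt_or_gt.1 (hadj i hi (by omega)) with hup | hdown
  · exact comparabilityGraph.dist_lt_of_peak hext hnf hup (hupDown.1 hup)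
      (hclosed.1 ⟨hup, hupDown.1 hup⟩) hlt
  · exact comparabilityGraph.dist_lt_of_valley hext hnf hdown (hupDown.2 hdown)
      (hclosed.2 ⟨hdown, hupDown.2 hdown⟩) hlt
end

section
/- Let Λ be a Coxeter diagram and let Λ′ be an admissible induced subdiagram of Λ that is a tree, such that the relative Artin complex Δ = Δ_{Λ,Λ′} satisfies the labeled 4-cycle condition. Let x₁x₂x₃x₄ be an embedded 4-cycle in Δ (four pairwise distinct vertices with xᵢ adjacent to xᵢ₊₁ cyclically), where xᵢ has type âᵢ with aᵢ ∈ Λ′, such that a₁, a₂, a₃ are the three valence-one vertices of a tripod subdiagram Λ″ of Λ′ and a₄ = a₂. Then either x₁ is adjacent to x₃, or there is a vertex y of Δ adjacent to each of x₁, x₂, x₃, x₄ whose type â satisfies that a lies on the path in Λ″ from the valence-three vertex of Λ″ to a₂ (endpoints included). -/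
open scoped Pointwise

namespace CoxDiagram

variable {S : Type*}

/-- A vertex of (a subdivision of) the Artin complex of `Λ`: a left coset of the standard
parabolic subgroup `A_{S ∖ T}` generated by the complement of a set `T` of generators.
Vertices of the Artin complex itself are those with `T` a singleton `{s}` (of type `ŝ`). -/
def PVertex (Λ : CoxDiagram S) : Type _ := Σ T : Set S, ArtinGroup Λ ⧸ Λ.parab Tᶜ

/-- The cosets corresponding to two vertices intersect. -/
def pmeets {Λ : CoxDiagram S} (v w : PVertex Λ) : Prop :=
  ∃ g : ArtinGroup Λ, QuotientGroup.mk g = v.2 ∧ QuotientGroup.mk g = w.2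

/-- Adjacency in the Artin complex: the vertices are distinct and their cosets meet. -/
def adjV {Λ : CoxDiagram S} (v w : PVertex Λ) : Prop := v ≠ w ∧ pmeets v w

/-- The induced subdiagram on `S'` is *admissible*: vertices of `S'` in different
components of `S' ∖ {s}` lie in different components of `S ∖ {s}`. -/
def Admissible (Λ : CoxDiagram S) (S' : Set S) : Prop :=
  ∀ s ∈ S', ∀ t ∈ S', ∀ r ∈ S', t ≠ s → r ≠ s →
    ConnIn Λ.graph {x : S | x ≠ s} t r → ConnIn Λ.graph {x : S | x ∈ S' ∧ x ≠ s} t r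

/-- `s` belongs to the smallest subtree of (the tree) `S'` containing `A`, i.e. `s`
belongs to every connected subset of `S'` containing `A`. -/
def InMinSubtree (Λ : CoxDiagram S) (S' : Set S) (A : Set S) (s : S) : Prop :=
  ∀ T : Set S, T ⊆ S' → (∀ a ∈ T, ∀ b ∈ T, ConnIn Λ.graph T a b) → A ⊆ T → s ∈ T

/-- The relative Artin complex `Δ_{Λ, S'}` satisfies the *labeled 4-cycle condition*:
every induced 4-cycle `x₁ x₂ x₃ x₄` of vertex types `ŝ₁ ŝ₂ ŝ₃ ŝ₄` with `sᵢ ∈ S'` admits a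
vertex adjacent to all four whose type `ŝ` satisfies that `s` lies in the smallest
subtree of `S'` containing `s₁, s₂, s₃, s₄`. -/
def Labeled4Cycle (Λ : CoxDiagram S) (S' : Set S) : Prop :=
  ∀ (x₁ x₂ x₃ x₄ : PVertex Λ) (s₁ s₂ s₃ s₄ : S),
    s₁ ∈ S' → s₂ ∈ S' → s₃ ∈ S' → s₄ ∈ S' →
    x₁.1 = {s₁} → x₂.1 = {s₂} → x₃.1 = {s₃} → x₄.1 = {s₄} →
    adjV x₁ x₂ → adjV x₂ x₃ → adjV x₃ x₄ → adjV x₄ x₁ →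
    x₁ ≠ x₃ → x₂ ≠ x₄ → ¬ pmeets x₁ x₃ → ¬ pmeets x₂ x₄ →
    ∃ (x : PVertex Λ) (s : S), s ∈ S' ∧ x.1 = {s} ∧
      adjV x x₁ ∧ adjV x x₂ ∧ adjV x x₃ ∧ adjV x x₄ ∧
      InMinSubtree Λ S' {s₁, s₂, s₃, s₄} s

/-- A `D_{n+1}`-like subdiagram, given by `b 1, …, b (n+1)`: the vertices `b 1` and `b 2`
are each joined to `b 3`, and `b 3, b 4, …, b (n+1)` is a path; the subdiagram is induced
(no other edges) and the edge labels are arbitrary. -/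
def IsDLike (Λ : CoxDiagram S) (n : ℕ) (b : ℕ → S) : Prop :=
  2 ≤ n ∧
  (∀ i j, 1 ≤ i → i ≤ n + 1 → 1 ≤ j → j ≤ n + 1 → b i = b j → i = j) ∧
  (∀ i j, 1 ≤ i → i ≤ n + 1 → 1 ≤ j → j ≤ n + 1 →
    (Λ.graph.Adj (b i) (b j) ↔
      ((i = 1 ∧ j = 3) ∨ (i = 3 ∧ j = 1) ∨ (i = 2 ∧ j = 3) ∨ (i = 3 ∧ j = 2) ∨
        (3 ≤ i ∧ j = i + 1) ∨ (3 ≤ j ∧ i = j + 1))))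

/-- The vertex set of a `D`-like subdiagram. -/
def DSet (b : ℕ → S) (n : ℕ) : Set S := {s : S | ∃ i, 1 ≤ i ∧ i ≤ n + 1 ∧ s = b i}

/-- The `τ`-value of a vertex-type of the `(b 1, b 2)`-subdivision: `τ = 1` on types
`b̂ 1`, `b̂ 2`; `τ = 2` on midpoint vertices (cosets of `A_{S ∖ {b 1, b 2}}`); and
`τ = i` on type `b̂ i` for `3 ≤ i ≤ n + 1`. -/
def subdivTau (b : ℕ → S) (n : ℕ) (T : Set S) (k : ℕ) : Prop :=
  (k = 1 ∧ (T = {b 1} ∨ T = {b 2})) ∨ (k = 2 ∧ T = ({b 1, b 2} : Set S)) ∨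
    (3 ≤ k ∧ k ≤ n + 1 ∧ T = {b k})

/-- `v` is a vertex of the `(b 1, b 2)`-subdivision of `Δ_{Λ, Λ₀}`. -/
def SubOk {Λ : CoxDiagram S} (b : ℕ → S) (n : ℕ) (v : PVertex Λ) : Prop :=
  v.1 = ({b 1, b 2} : Set S) ∨ ∃ i, 1 ≤ i ∧ i ≤ n + 1 ∧ v.1 = {b i}

/-- The partial order on the vertices of the `(b 1, b 2)`-subdivision: `v < w` iff the
cosets intersect and `τ v < τ w`. -/
def SubLt {Λ : CoxDiagram S} (b : ℕ → S) (n : ℕ) (v w : PVertex Λ) : Prop :=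
  pmeets v w ∧ ∃ k l, subdivTau b n v.1 k ∧ subdivTau b n w.1 l ∧ k < l

end CoxDiagram

section RelDefs

variable {X : Type*} (lt : X → X → Prop)

/-- The reflexive closure of a strict relation. -/
def RelLe (a b : X) : Prop := lt a b ∨ a = b

/-- A relation is *bowtie free* if every quasi-bowtie has a center. -/
def RelBowtieFree : Prop :=
  ∀ x₁ y₁ x₂ y₂ : X, lt x₁ y₁ → lt x₁ y₂ → lt x₂ y₁ → lt x₂ y₂ →
    ∃ z : X, RelLe lt x₁ z ∧ RelLe lt x₂ z ∧ RelLe lt z y₁ ∧ RelLe lt z y₂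

/-- *Upward flag*: three pairwise upper-bounded elements have a common upper bound. -/
def RelUpwardFlag : Prop :=
  ∀ p₁ p₂ p₃ : X, (∃ q, RelLe lt p₁ q ∧ RelLe lt p₂ q) →
    (∃ q, RelLe lt p₂ q ∧ RelLe lt p₃ q) → (∃ q, RelLe lt p₁ q ∧ RelLe lt p₃ q) →
    ∃ q, RelLe lt p₁ q ∧ RelLe lt p₂ q ∧ RelLe lt p₃ q

/-- *Downward flag*: three pairwise lower-bounded elements have a common lower bound. -/
def RelDownwardFlag : Prop :=
  ∀ p₁ p₂ p₃ : X, (∃ q, RelLe lt q p₁ ∧ RelLe lt q p₂) →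
    (∃ q, RelLe lt q p₂ ∧ RelLe lt q p₃) → (∃ q, RelLe lt q p₁ ∧ RelLe lt q p₃) →
    ∃ q, RelLe lt q p₁ ∧ RelLe lt q p₂ ∧ RelLe lt q p₃

/-- `q` is a maximal element. -/
def RelMaximalEl (q : X) : Prop := ∀ w, ¬ lt q w

/-- `q` is a minimal element. -/
def RelMinimalEl (q : X) : Prop := ∀ w, ¬ lt w q

/-- *Weakly upward flag*: whenever each pair among three elements has a non-maximal upper
bound, the three have a common upper bound. -/
def RelWeaklyUpwardFlag : Prop :=
  ∀ p₁ p₂ p₃ : X,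
    (∃ q, RelLe lt p₁ q ∧ RelLe lt p₂ q ∧ ¬ RelMaximalEl lt q) →
    (∃ q, RelLe lt p₂ q ∧ RelLe lt p₃ q ∧ ¬ RelMaximalEl lt q) →
    (∃ q, RelLe lt p₁ q ∧ RelLe lt p₃ q ∧ ¬ RelMaximalEl lt q) →
    ∃ q, RelLe lt p₁ q ∧ RelLe lt p₂ q ∧ RelLe lt p₃ q

/-- *Weakly downward flag*: dual of weakly upward flag. -/
def RelWeaklyDownwardFlag : Prop :=
  ∀ p₁ p₂ p₃ : X,
    (∃ q, RelLe lt q p₁ ∧ RelLe lt q p₂ ∧ ¬ RelMinimalEl lt q) →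
    (∃ q, RelLe lt q p₂ ∧ RelLe lt q p₃ ∧ ¬ RelMinimalEl lt q) →
    (∃ q, RelLe lt q p₁ ∧ RelLe lt q p₃ ∧ ¬ RelMinimalEl lt q) →
    ∃ q, RelLe lt q p₁ ∧ RelLe lt q p₂ ∧ RelLe lt q p₃

/-- *Weakly flag*: weakly upward and weakly downward flag. -/
def RelWeaklyFlag : Prop := RelWeaklyUpwardFlag lt ∧ RelWeaklyDownwardFlag lt

end RelDefs

open CoxDiagram

namespace CoxDiagram

variable {S : Type*}

/-- The valence of `v` within the induced subdiagram on `T`. -/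
noncomputable def degIn (Λ : CoxDiagram S) (T : Set S) (v : S) : ℕ :=
  Set.ncard {u : S | u ∈ T ∧ Λ.graph.Adj v u}

/-- `T` (with branch vertex `c`) is a *tripod* subdiagram: the induced subdiagram on `T`
is a tree, `c` has valence three in it, and every other vertex has valence one or two. -/
def IsTripod (Λ : CoxDiagram S) (T : Set S) (c : S) : Prop :=
  (Λ.graph.induce T).IsTree ∧ c ∈ T ∧ degIn Λ T c = 3 ∧
    ∀ v ∈ T, v ≠ c → (degIn Λ T v = 1 ∨ degIn Λ T v = 2)

/-- `a` lies on the path in the tree `T` from `p` to `q` (endpoints included): `a ∈ T`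
and either `a` is an endpoint or removing `a` disconnects `p` from `q` within `T`. -/
def OnTreePath (Λ : CoxDiagram S) (T : Set S) (p q a : S) : Prop :=
  a ∈ T ∧ (a = p ∨ a = q ∨ ¬ ConnIn Λ.graph (T \ {a}) p q)

end CoxDiagram

/-! The labeled 4-cycle condition gives a vertex `y` of type `ŝ` adjacent to every `xᵢ`, with
`s` in the tripod and `s ≠ aᵢ`. If `s` separates `a₁` from `a₃` in `Λ′`, then by admissibility it
does so in `Λ`, and `A_{S ∖ {s}}` is the product of two commuting standard parabolic subgroups, one
avoiding `a₁` and the other `a₃`; this forces the cosets of `x₁` and `x₃` to meet. Otherwise `s`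
lies on the leg from `c` to `a₂`: if not, `c` and `a₂` lie in one component of `T ∖ {s}`, and as
`c` separates `a₁` from `a₃`, the path from `a₁` to `a₃` avoiding `s` runs through `c`. So all
three leaves lie in one component of `Λ′ ∖ {s}`, whereas the two branches of `T` at `s` end in
leaves that `s` separates. -/

/-- A longest path starting with the edge `u v` ends in a leaf. -/
theorem SimpleGraph.IsAcyclic.exists_walk_to_leaf {W : Type*} [Finite W] {H : SimpleGraph W}
    (hH : H.IsAcyclic) {u v : W} (huv : H.Adj u v) :
    ∃ ℓ, ∃ q : H.Walk v ℓ, u ∉ q.support ∧ ∃! w, H.Adj ℓ w := by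
  classical
  have := Fintype.ofFinite W
  let lengths : Set ℕ := {n | ∃ ℓ, ∃ q : H.Walk v ℓ, (q.cons huv).IsPath ∧ q.length = n}
  have hbdd : BddAbove lengths := ⟨Fintype.card W, by
    rintro _ ⟨ℓ, q, hq, rfl⟩
    have := hq.length_lt
    simp only [Walk.length_cons] at this
    omega⟩
  have hne : lengths.Nonempty := ⟨0, v, .nil, by simpa using huv.ne, rfl⟩
  obtain ⟨ℓ, q, hq, hlen⟩ := Nat.sSup_mem hne hbdd
  have hmax : ∀ w, H.Adj ℓ w → w ∈ (q.cons huv).support := by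
    intro w hw
    by_contra hwq
    have hlong : q.length + 1 ∈ lengths :=
      ⟨w, q.concat hw, by simpa [Walk.concat_cons] using hq.concat hwq hw, by simp⟩
    have := le_csSup hbdd hlong
    omega
  refine ⟨ℓ, q, ((Walk.cons_isPath_iff _ _).mp hq).2, (q.cons huv).penultimate,
    (Walk.adj_penultimate (Walk.not_nil_cons)).symm, fun w hw => ?_⟩
  exact hH.eq_penultimate_of_adj_end hq hw (hmax w hw)

theorem Equivalence.not_rel_of_pairwise_not_rel {α : Type*} {R : α → α → Prop}
    (hR : Equivalence R) {a₁ a₂ a₃ ℓ₁ ℓ₂ ℓ₃ : α} (h₁ : ℓ₁ = a₁ ∨ ℓ₁ = a₂ ∨ ℓ₁ = a₃)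
    (h₂ : ℓ₂ = a₁ ∨ ℓ₂ = a₂ ∨ ℓ₂ = a₃) (h₃ : ℓ₃ = a₁ ∨ ℓ₃ = a₂ ∨ ℓ₃ = a₃)
    (h₁₂ : ¬ R ℓ₁ ℓ₂) (h₁₃ : ¬ R ℓ₁ ℓ₃) (h₂₃ : ¬ R ℓ₂ ℓ₃) : ¬ R a₁ a₃ := by
  intro h
  have h' := hR.symm h
  have hrefl := hR.refl
  rcases h₁ with rfl | rfl | rfl <;> rcases h₂ with rfl | rfl | rfl <;>
    rcases h₃ with rfl | rfl | rfl <;> simp_all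

theorem Subgroup.exists_mk_eq_mk_of_mem_closure_union {G : Type*} [Group G] {A B : Set G}
    (hAB : ∀ a ∈ A, ∀ b ∈ B, Commute a b) {g h : G}
    (hgh : g⁻¹ * h ∈ Subgroup.closure (A ∪ B)) :
    ∃ k : G, (k : G ⧸ Subgroup.closure B) = g ∧ (k : G ⧸ Subgroup.closure A) = h := by
  have hcent : Subgroup.closure A ≤ Subgroup.centralizer (Subgroup.closure B) := by
    rw [Subgroup.centralizer_closure, Subgroup.closure_le]
    exact fun a ha b hb => (hAB a ha b hb).symm.eq
  rw [← SetLike.mem_coe, Subgroup.closure_union, Subgroup.coe_mul_of_left_le_normalizer_right _ _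
    (hcent.trans (Subgroup.centralizer_le_normalizer _))] at hgh
  obtain ⟨u, hu, v, hv, huv⟩ := hgh
  have hvu : v * u = u * v := Subgroup.mem_centralizer_iff.mp (hcent hu) v hv
  have hk : g * v = h * u⁻¹ := by
    rw [show h = g * (u * v) by simp [show u * v = g⁻¹ * h from huv], ← hvu]
    group
  refine ⟨g * v, ?_, ?_⟩
  · rw [QuotientGroup.eq]
    simpa using inv_mem hv
  · rw [hk, QuotientGroup.eq]
    simpa using hu

namespace CoxDiagram

section ConnIn

variable {V : Type*} {G : SimpleGraph V} {X Y : Set V} {a b : V}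

theorem ConnIn.mono (hXY : X ⊆ Y) (h : ConnIn G X a b) : ConnIn G Y a b :=
  Relation.ReflTransGen.mono (fun _ _ huv => ⟨hXY huv.1, hXY huv.2.1, huv.2.2⟩) _ _ h

theorem ConnIn.trans {c : V} (hab : ConnIn G X a b) (hbc : ConnIn G X b c) :
    ConnIn G X a c :=
  Relation.ReflTransGen.trans hab hbc

theorem ConnIn.symm (h : ConnIn G X a b) : ConnIn G X b a := by
  induction h with
  | refl => exact Relation.ReflTransGen.refl
  | tail _ hstep ih => exact Relation.ReflTransGen.head ⟨hstep.2.1, hstep.1, hstep.2.2.symm⟩ ih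

theorem connIn_equivalence : Equivalence (ConnIn G X) :=
  ⟨fun _ => Relation.ReflTransGen.refl, ConnIn.symm, ConnIn.trans⟩

theorem connIn_of_walk {a b : Y} (q : (G.induce Y).Walk a b) (hq : ∀ x ∈ q.support, ↑x ∈ X) :
    ConnIn G X a b := by
  induction q with
  | nil => exact Relation.ReflTransGen.refl
  | cons h q ih =>
    simp only [SimpleGraph.Walk.support_cons, List.mem_cons, forall_eq_or_imp] at hq
    exact Relation.ReflTransGen.head ⟨hq.1, hq.2 _ q.start_mem_support, h⟩ (ih hq.2)

theorem connIn_of_connected (hY : (G.induce Y).Connected) (ha : a ∈ Y) (hb : b ∈ Y) :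
    ConnIn G Y a b :=
  let ⟨w⟩ := hY.preconnected ⟨a, ha⟩ ⟨b, hb⟩
  connIn_of_walk w fun x _ => x.2

theorem ConnIn.exists_walk (h : ConnIn G X a b) (ha : a ∈ X) (hXY : X ⊆ Y) :
    ∃ hb : b ∈ Y, ∃ q : (G.induce Y).Walk ⟨a, hXY ha⟩ ⟨b, hb⟩, ∀ x ∈ q.support, ↑x ∈ X := by
  induction h with
  | refl => exact ⟨hXY ha, .nil, by simpa using ha⟩
  | tail _ hstep ih =>
    obtain ⟨_, q, hq⟩ := ih
    refine ⟨hXY hstep.2.1,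
      q.concat (show (G.induce Y).Adj _ ⟨_, hXY hstep.2.1⟩ from hstep.2.2), ?_⟩
    simp only [SimpleGraph.Walk.support_concat, List.mem_append, List.mem_singleton]
    exact fun x hx => hx.elim (hq x) fun h => h ▸ hstep.2.1

theorem ConnIn.diff_singleton_or (z : V) (h : ConnIn G X a b) :
    ConnIn G (X \ {z}) a b ∨ ConnIn G X a z := by
  induction h using Relation.ReflTransGen.head_induction_on with
  | refl => exact Or.inl Relation.ReflTransGen.refl
  | @head u m hstep _ ih =>
    by_cases huz : u = z
    · exact Or.inr (huz ▸ Relation.ReflTransGen.refl)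
    by_cases hmz : m = z
    · exact Or.inr (Relation.ReflTransGen.single (hmz ▸ hstep))
    refine ih.imp (Relation.ReflTransGen.head ⟨⟨hstep.1, huz⟩, ⟨hstep.2.1, hmz⟩, hstep.2.2⟩)
      (Relation.ReflTransGen.head hstep)

theorem not_connIn_diff_singleton_of_adj (hY : (G.induce Y).IsAcyclic) {z i j : V}
    (hz : z ∈ Y) (hi : i ∈ Y) (hj : j ∈ Y) (hzi : G.Adj z i) (hzj : G.Adj z j) (hij : i ≠ j) :
    ¬ ConnIn G (Y \ {z}) i j := by
  classical
  intro h
  obtain ⟨_, q, hq⟩ := h.exists_walk ⟨hi, hzi.ne'⟩ Set.sdiff_subset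
  have hz_q : (⟨z, hz⟩ : Y) ∉ q.bypass.reverse.support := fun hmem => by
    rw [SimpleGraph.Walk.support_reverse, List.mem_reverse] at hmem
    exact (hq _ (q.support_bypass_subset_support hmem)).2 rfl
  let r : (G.induce Y).Walk ⟨z, hz⟩ ⟨i, hi⟩ := .cons (show (G.induce Y).Adj _ ⟨j, hj⟩ from hzj)
    q.bypass.reverse
  have hr : r.IsPath := (SimpleGraph.Walk.cons_isPath_iff _ _).mpr ⟨q.bypass_isPath.reverse, hz_q⟩
  have := hY.eq_snd_of_adj_start hr (show (G.induce Y).Adj _ ⟨i, hi⟩ from hzi) r.end_mem_support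
  rw [SimpleGraph.Walk.snd_cons] at this
  exact hij (congrArg Subtype.val this)

theorem not_connIn_of_connIn_of_adj (hY : (G.induce Y).IsAcyclic) {T : Set V} (hTY : T ⊆ Y)
    {z i j ℓ ℓ' : V} (hz : z ∈ T) (hi : i ∈ T) (hj : j ∈ T) (hzi : G.Adj z i)
    (hzj : G.Adj z j) (hij : i ≠ j) (hiℓ : ConnIn G (T \ {z}) i ℓ)
    (hjℓ' : ConnIn G (T \ {z}) j ℓ') : ¬ ConnIn G (Y \ {z}) ℓ ℓ' := fun h =>
  have hTz : T \ {z} ⊆ Y \ {z} := Set.sdiff_subset_sdiff_left hTY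
  not_connIn_diff_singleton_of_adj hY (hTY hz) (hTY hi) (hTY hj) hzi hzj hij
    (((hiℓ.mono hTz).trans h).trans (hjℓ'.mono hTz).symm)

theorem exists_leaf_connIn [Finite V] {T : Set V}
    (hT : (G.induce T).IsAcyclic) {u v : V} (hu : u ∈ T) (hv : v ∈ T) (huv : G.Adj u v) :
    ∃ ℓ ∈ T, {w | w ∈ T ∧ G.Adj ℓ w}.ncard = 1 ∧ ConnIn G (T \ {u}) v ℓ := by
  obtain ⟨ℓ, q, hqu, w, hℓw, hw⟩ :=
    hT.exists_walk_to_leaf (show (G.induce T).Adj ⟨u, hu⟩ ⟨v, hv⟩ from huv)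
  refine ⟨ℓ, ℓ.2, Set.ncard_eq_one.mpr ⟨w, ?_⟩, connIn_of_walk q fun x hx =>
    ⟨x.2, fun hxu => hqu ((Subtype.ext hxu : x = ⟨u, hu⟩) ▸ hx)⟩⟩
  ext x
  simp only [Set.mem_ofPred_eq, Set.mem_singleton_iff]
  exact ⟨fun hx => congrArg Subtype.val (hw ⟨x, hx.1⟩ hx.2), fun hx => hx ▸ ⟨w.2, hℓw⟩⟩

end ConnIn

section Artin

variable {S : Type*} {Λ : CoxDiagram S}

theorem commute_gen_of_M_eq_two {u v : S} (h : Λ.M u v = 2) :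
    Commute (Λ.gen u) (Λ.gen v) := by
  have hrel : altWord u v 2 * (altWord v u 2)⁻¹ ∈ artinRels Λ :=
    ⟨u, v, by rw [h]; norm_num, by rw [h]⟩
  have h1 : PresentedGroup.mk (artinRels Λ) (altWord u v 2 * (altWord v u 2)⁻¹) = 1 :=
    (QuotientGroup.eq_one_iff _).mpr (Subgroup.subset_normalClosure hrel)
  simp only [altWord, map_mul, map_inv, mul_one, mul_inv_eq_one] at h1
  exact h1

theorem PVertex.eq_of_pmeets {T : Set S} {q q' : ArtinGroup Λ ⧸ Λ.parab Tᶜ}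
    (h : pmeets (⟨T, q⟩ : PVertex Λ) ⟨T, q'⟩) : (⟨T, q⟩ : PVertex Λ) = ⟨T, q'⟩ :=
  let ⟨_, h₁, h₂⟩ := h
  congrArg (Sigma.mk T) (h₁.symm.trans h₂)

/-- Removing `s` splits the generators of `A_{S ∖ {s}}` into two pairwise commuting sets, one
avoiding `a` and the other avoiding `b`. -/
theorem pmeets_of_not_connIn {s a b : S} (hab : ¬ ConnIn Λ.graph {x | x ≠ s} a b)
    {qs : ArtinGroup Λ ⧸ Λ.parab {s}ᶜ} {qa : ArtinGroup Λ ⧸ Λ.parab {a}ᶜ}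
    {qb : ArtinGroup Λ ⧸ Λ.parab {b}ᶜ} (ha : pmeets (⟨{s}, qs⟩ : PVertex Λ) ⟨{a}, qa⟩)
    (hb : pmeets (⟨{s}, qs⟩ : PVertex Λ) ⟨{b}, qb⟩) :
    pmeets (⟨{a}, qa⟩ : PVertex Λ) ⟨{b}, qb⟩ := by
  set U := {t | t ≠ s ∧ ConnIn Λ.graph {x | x ≠ s} a t}
  set V := {t | t ≠ s ∧ ¬ ConnIn Λ.graph {x | x ≠ s} a t}
  have hUV : ∀ x ∈ Λ.gen '' U, ∀ y ∈ Λ.gen '' V, Commute x y := by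
    rintro _ ⟨u, hu, rfl⟩ _ ⟨v, hv, rfl⟩
    refine commute_gen_of_M_eq_two (not_not.mp fun hM => hv.2 (hu.2.tail ⟨hu.1, hv.1, ?_, hM⟩))
    exact fun huv => hv.2 (huv ▸ hu.2)
  obtain ⟨g₁, hg₁s, hg₁a⟩ := ha
  obtain ⟨g₃, hg₃s, hg₃b⟩ := hb
  have hmem : g₁⁻¹ * g₃ ∈ Subgroup.closure (Λ.gen '' U ∪ Λ.gen '' V) := by
    rw [← Set.image_union]
    refine Subgroup.closure_mono (Set.image_mono fun t ht => ?_)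
      (QuotientGroup.eq.mp (hg₁s.trans hg₃s.symm))
    by_cases hat : ConnIn Λ.graph {x | x ≠ s} a t
    exacts [Or.inl ⟨ht, hat⟩, Or.inr ⟨ht, hat⟩]
  have hVa : Subgroup.closure (Λ.gen '' V) ≤ Λ.parab {a}ᶜ :=
    Subgroup.closure_mono (Set.image_mono fun t ht hta => ht.2 (hta ▸ Relation.ReflTransGen.refl))
  have hUb : Subgroup.closure (Λ.gen '' U) ≤ Λ.parab {b}ᶜ :=
    Subgroup.closure_mono (Set.image_mono fun t ht htb => hab (htb ▸ ht.2))
  obtain ⟨k, hk₁, hk₃⟩ := Subgroup.exists_mk_eq_mk_of_mem_closure_union hUV hmem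
  exact ⟨k, (QuotientGroup.eq.mpr (hVa (QuotientGroup.eq.mp hk₁))).trans hg₁a,
    (QuotientGroup.eq.mpr (hUb (QuotientGroup.eq.mp hk₃))).trans hg₃b⟩

end Artin

section Tripod

variable {S : Type*} [Finite S] {Λ : CoxDiagram S} {S' T : Set S} {c a₁ a₂ a₃ : S}

theorem exists_tripod_leaf_connIn (hT : (Λ.graph.induce T).IsAcyclic)
    (hleaves : ∀ v ∈ T, degIn Λ T v = 1 → v = a₁ ∨ v = a₂ ∨ v = a₃) {z w : S} (hz : z ∈ T)
    (hw : w ∈ T) (hzw : Λ.graph.Adj z w) :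
    ∃ ℓ, (ℓ = a₁ ∨ ℓ = a₂ ∨ ℓ = a₃) ∧ ConnIn Λ.graph (T \ {z}) w ℓ :=
  let ⟨ℓ, hℓ, hdeg, hconn⟩ := exists_leaf_connIn hT hz hw hzw
  ⟨ℓ, hleaves ℓ hℓ hdeg, hconn⟩

/-- The three branches at `c` end in leaves pairwise separated by `c`, which must therefore be
`a₁, a₂, a₃` in some order. -/
theorem not_connIn_diff_center (hS' : (Λ.graph.induce S').IsAcyclic) (hTS : T ⊆ S')
    (htri : IsTripod Λ T c) (hleaves : ∀ v ∈ T, degIn Λ T v = 1 → v = a₁ ∨ v = a₂ ∨ v = a₃) :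
    ¬ ConnIn Λ.graph (S' \ {c}) a₁ a₃ := by
  obtain ⟨n₁, n₂, n₃, h₁₂, h₁₃, h₂₃, hN⟩ := Set.ncard_eq_three.mp htri.2.2.1
  have hn : ∀ n ∈ ({n₁, n₂, n₃} : Set S), n ∈ T ∧ Λ.graph.Adj c n :=
    fun n hn => (Set.ext_iff.mp hN n).mpr hn
  choose ℓ hℓ hconn using fun n (h : n ∈ ({n₁, n₂, n₃} : Set S)) =>
    exists_tripod_leaf_connIn htri.1.isAcyclic hleaves htri.2.1 (hn n h).1 (hn n h).2
  have hsep : ∀ n hn m hm, n ≠ m → ¬ ConnIn Λ.graph (S' \ {c}) (ℓ n hn) (ℓ m hm) :=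
    fun n hn' m hm hnm => not_connIn_of_connIn_of_adj hS' hTS htri.2.1 (hn n hn').1
      (hn m hm).1 (hn n hn').2 (hn m hm).2 hnm (hconn n hn') (hconn m hm)
  exact connIn_equivalence.not_rel_of_pairwise_not_rel (hℓ n₁ (by simp)) (hℓ n₂ (by simp))
    (hℓ n₃ (by simp)) (hsep _ _ _ _ h₁₂) (hsep _ _ _ _ h₁₃) (hsep _ _ _ _ h₂₃)

theorem onTreePath_of_connIn (hS' : (Λ.graph.induce S').IsAcyclic) (hTS : T ⊆ S')
    (htri : IsTripod Λ T c) (hleaves : ∀ v ∈ T, degIn Λ T v = 1 → v = a₁ ∨ v = a₂ ∨ v = a₃)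
    {s : S} (hsT : s ∈ T) (hs₁ : s ≠ a₁) (hs₂ : s ≠ a₂) (hs₃ : s ≠ a₃)
    (h₁₃ : ConnIn Λ.graph (S' \ {s}) a₁ a₃) : OnTreePath Λ T c a₂ s := by
  refine ⟨hsT, ?_⟩
  by_cases hsc : s = c
  · exact Or.inl hsc
  by_cases hca : ConnIn Λ.graph (T \ {s}) c a₂
  swap
  · exact Or.inr (Or.inr hca)
  exfalso
  have hdeg : degIn Λ T s = 2 := (htri.2.2.2 s hsT hsc).resolve_left fun h => by
    rcases hleaves s hsT h with rfl | rfl | rfl <;> contradiction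
  obtain ⟨p, q, hpq, hPQ⟩ := Set.ncard_eq_two.mp hdeg
  have hp : p ∈ T ∧ Λ.graph.Adj s p := (Set.ext_iff.mp hPQ p).mpr (by simp)
  have hq : q ∈ T ∧ Λ.graph.Adj s q := (Set.ext_iff.mp hPQ q).mpr (by simp)
  obtain ⟨ℓp, hℓp, hconnp⟩ := exists_tripod_leaf_connIn htri.1.isAcyclic hleaves hsT hp.1 hp.2
  obtain ⟨ℓq, hℓq, hconnq⟩ := exists_tripod_leaf_connIn htri.1.isAcyclic hleaves hsT hq.1 hq.2
  have hsep := not_connIn_of_connIn_of_adj hS' hTS hsT hp.1 hq.1 hp.2 hq.2 hpq hconnp hconnq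
  have h₁c : ConnIn Λ.graph (S' \ {s}) a₁ c := (h₁₃.diff_singleton_or c).resolve_left fun h =>
    not_connIn_diff_center hS' hTS htri hleaves
      (h.mono (Set.sdiff_subset_sdiff_left Set.sdiff_subset))
  have hall : ∀ ℓ, (ℓ = a₁ ∨ ℓ = a₂ ∨ ℓ = a₃) → ConnIn Λ.graph (S' \ {s}) a₁ ℓ := by
    rintro ℓ (rfl | rfl | rfl)
    · exact Relation.ReflTransGen.refl
    · exact h₁c.trans (hca.mono (Set.sdiff_subset_sdiff_left hTS))
    · exact h₁₃
  exact hsep ((hall ℓp hℓp).symm.trans (hall ℓq hℓq))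

end Tripod

end CoxDiagram

theorem tripod_four_cycle_general {S : Type*} [Fintype S] (Λ : CoxDiagram S) (S' : Set S)
    (htree : (Λ.graph.induce S').IsTree)
    (hadm : Admissible Λ S')
    (h4 : Labeled4Cycle Λ S')
    (T : Set S) (hTS : T ⊆ S') (c a₁ a₂ a₃ : S)
    (htri : IsTripod Λ T c)
    (ha₁ : a₁ ∈ T) (ha₂ : a₂ ∈ T) (ha₃ : a₃ ∈ T)
    (hleaves : ∀ v ∈ T, degIn Λ T v = 1 → v = a₁ ∨ v = a₂ ∨ v = a₃)
    (x₁ x₂ x₃ x₄ : PVertex Λ)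
    (ht₁ : x₁.1 = {a₁}) (ht₂ : x₂.1 = {a₂}) (ht₃ : x₃.1 = {a₃}) (ht₄ : x₄.1 = {a₂})
    (hx13 : x₁ ≠ x₃) (hx24 : x₂ ≠ x₄)
    (e12 : adjV x₁ x₂) (e23 : adjV x₂ x₃) (e34 : adjV x₃ x₄) (e41 : adjV x₄ x₁) :
    adjV x₁ x₃ ∨
      ∃ (y : PVertex Λ) (a : S), y.1 = {a} ∧
        adjV y x₁ ∧ adjV y x₂ ∧ adjV y x₃ ∧ adjV y x₄ ∧
        OnTreePath Λ T c a₂ a := by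
  obtain ⟨_, q₁⟩ := x₁; obtain ⟨_, q₂⟩ := x₂; obtain ⟨_, q₃⟩ := x₃; obtain ⟨_, q₄⟩ := x₄
  subst ht₁ ht₂ ht₃ ht₄
  by_cases hm13 : pmeets (⟨{a₁}, q₁⟩ : PVertex Λ) ⟨{a₃}, q₃⟩
  · exact Or.inl ⟨hx13, hm13⟩
  obtain ⟨⟨_, qy⟩, s, -, rfl, hy₁, hy₂, hy₃, hy₄, hmin⟩ :=
    h4 _ _ _ _ a₁ a₂ a₃ a₂ (hTS ha₁) (hTS ha₂) (hTS ha₃) (hTS ha₂) rfl rfl rfl rfl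
      e12 e23 e34 e41 hx13 hx24 hm13 fun h => hx24 (PVertex.eq_of_pmeets h)
  have hsT : s ∈ T := hmin T hTS (fun _ ha _ hb => connIn_of_connected htri.1.connected ha hb)
    (by rintro _ (rfl | rfl | rfl | rfl) <;> assumption)
  have hne : ∀ {a : S} {q}, adjV (⟨{s}, qy⟩ : PVertex Λ) ⟨{a}, q⟩ → s ≠ a := by
    rintro a q h rfl
    exact h.1 (PVertex.eq_of_pmeets h.2)
  by_cases hsep : ConnIn Λ.graph (S' \ {s}) a₁ a₃
  · exact Or.inr ⟨_, s, rfl, hy₁, hy₂, hy₃, hy₄, onTreePath_of_connIn htree.isAcyclic hTS htri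
      hleaves hsT (hne hy₁) (hne hy₂) (hne hy₃) hsep⟩
  · refine absurd (pmeets_of_not_connIn (fun h => hsep ?_) hy₁.2 hy₃.2) hm13
    exact hadm s (hTS hsT) a₁ (hTS ha₁) a₃ (hTS ha₃) (hne hy₁).symm (hne hy₃).symm h

/-- Let `Λ′` (vertex set `S'`) be an admissible induced tree subdiagram
of `Λ` such that `Δ = Δ_{Λ,Λ′}` satisfies the labeled 4-cycle condition.  Let
`x₁ x₂ x₃ x₄` be an embedded 4-cycle in `Δ` of types `â₁ â₂ â₃ â₂`, where `a₁, a₂, a₃`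
are the three valence-one vertices of a tripod subdiagram `T ⊆ S'` with branch vertex
`c`.  Then either `x₁` is adjacent to `x₃`, or there is a vertex `y` of `Δ` adjacent to
each `xᵢ` whose type `â` satisfies that `a` lies on the path in `T` from `c` to `a₂`. -/
theorem tripod_four_cycle {S : Type*} [Fintype S] (Λ : CoxDiagram S) (S' : Set S)
    (htree : (Λ.graph.induce S').IsTree)
    (hadm : Admissible Λ S')
    (h4 : Labeled4Cycle Λ S')
    (T : Set S) (hTS : T ⊆ S') (c a₁ a₂ a₃ : S)
    (htri : IsTripod Λ T c)
    (ha₁ : a₁ ∈ T) (ha₂ : a₂ ∈ T) (ha₃ : a₃ ∈ T)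
    (h12 : a₁ ≠ a₂) (h13 : a₁ ≠ a₃) (h23 : a₂ ≠ a₃)
    (hd₁ : degIn Λ T a₁ = 1) (hd₂ : degIn Λ T a₂ = 1) (hd₃ : degIn Λ T a₃ = 1)
    (hleaves : ∀ v ∈ T, degIn Λ T v = 1 → v = a₁ ∨ v = a₂ ∨ v = a₃)
    (x₁ x₂ x₃ x₄ : PVertex Λ)
    (ht₁ : x₁.1 = {a₁}) (ht₂ : x₂.1 = {a₂}) (ht₃ : x₃.1 = {a₃}) (ht₄ : x₄.1 = {a₂})
    (hx13 : x₁ ≠ x₃) (hx24 : x₂ ≠ x₄)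
    (e12 : adjV x₁ x₂) (e23 : adjV x₂ x₃) (e34 : adjV x₃ x₄) (e41 : adjV x₄ x₁) :
    adjV x₁ x₃ ∨
      ∃ (y : PVertex Λ) (a : S), y.1 = {a} ∧
        adjV y x₁ ∧ adjV y x₂ ∧ adjV y x₃ ∧ adjV y x₄ ∧
        OnTreePath Λ T c a₂ a :=
  tripod_four_cycle_general Λ S' htree hadm h4 T hTS c a₁ a₂ a₃ htri ha₁ ha₂ ha₃ hleaves x₁ x₂ x₃ x₄
    ht₁ ht₂ ht₃ ht₄ hx13 hx24 e12 e23 e34 e41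
end
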